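/- arXiv:2311.15334 — 8 statements merged into one kernel-verified Lean document; each statement's English description precedes it below -/
import Mathlib

section
/- For every tree T on n vertices, the number of independent sets i(T) satisfies F_{n+2} ≤ i(T) ≤ 2^{n-1} + 1. -/
open SimpleGraph

/-- The number of independent sets in a graph (including the empty set). -/
noncomputable def numIndepSets {V : Type*} (G : SimpleGraph V) : ℕ :=
  Nat.card {s : Set V // ∀ u ∈ s, ∀ v ∈ s, ¬ G.Adj u v}

/-! Splitting the independent sets by whether they contain a vertex `v` gives
`i(G) = i(G - v) + i(G - N[v])`. A forest always has a vertex of degree at most one, so `G - N[v]`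
loses at most two vertices and the lower bound is the Fibonacci recurrence, by induction over
forests. For the upper bound take `v` a leaf of the tree: `G - v` is again a tree and `G - N[v]`
has `n - 2` vertices, so `i(G) ≤ (2 ^ (n - 2) + 1) + 2 ^ (n - 2)`. -/

theorem Nat.card_compl_singleton {V : Type*} [Finite V] (v : V) :
    Nat.card ↥({v}ᶜ : Set V) = Nat.card V - 1 := by
  rw [Nat.card_coe_set_eq, Set.ncard_compl, Set.ncard_singleton]

namespace SimpleGraph

variable {V : Type*} {G : SimpleGraph V}

theorem numIndepSets_eq_ncard (G : SimpleGraph V) :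
    numIndepSets G = {s : Set V | G.IsIndepSet s}.ncard := by
  rw [numIndepSets, ← Nat.card_coe_set_eq]
  congr! 3 with s
  exact ⟨fun h u hu v hv _ => h u hu v hv,
    fun h u hu v hv huv => h hu hv (G.ne_of_adj huv) huv⟩

theorem numIndepSets_induce (G : SimpleGraph V) (A : Set V) :
    numIndepSets (G.induce A) = {s : Set V | G.IsIndepSet s ∧ s ⊆ A}.ncard := by
  have himage : {s : Set V | G.IsIndepSet s ∧ s ⊆ A} =
      Set.image Subtype.val '' {t : Set A | (G.induce A).IsIndepSet t} := by
    ext s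
    constructor
    · rintro ⟨hs, hsA⟩
      refine ⟨Subtype.val ⁻¹' s, ?_, Set.image_preimage_eq_of_subset (by simpa using hsA)⟩
      exact fun a ha b hb hab => hs ha hb (Subtype.val_injective.ne hab)
    · rintro ⟨t, ht, rfl⟩
      exact ⟨(Subtype.val_injective.injOn.pairwise_image).2 ht, Subtype.coe_image_subset A t⟩
  rw [himage, Set.ncard_image_of_injective _ (Set.image_injective.2 Subtype.val_injective),
    numIndepSets_eq_ncard]

theorem isIndepSet_insert {s : Set V} {v : V} :
    G.IsIndepSet (insert v s) ↔ G.IsIndepSet s ∧ s ⊆ (G.neighborSet v)ᶜ := by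
  rw [IsIndepSet, Set.pairwise_insert]
  refine and_congr_right fun _ =>
    ⟨fun h b hb hvb => ?_, fun h b hb _ => ⟨h hb, fun hbv => h hb hbv.symm⟩⟩
  by_cases hbv : v = b
  · exact G.irrefl (hbv ▸ hvb)
  · exact (h b hb hbv).1 hvb

theorem subset_compl_insert_neighborSet_iff {s : Set V} {v : V} :
    s ⊆ (insert v (G.neighborSet v))ᶜ ↔ v ∉ s ∧ s ⊆ (G.neighborSet v)ᶜ := by
  simp only [Set.subset_compl_iff_disjoint_right, Set.disjoint_insert_right]

theorem numIndepSets_eq_add [Finite V] (G : SimpleGraph V) (v : V) :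
    numIndepSets G = numIndepSets (G.induce {v}ᶜ) +
      numIndepSets (G.induce (insert v (G.neighborSet v))ᶜ) := by
  have hout : {s : Set V | G.IsIndepSet s ∧ s ⊆ {v}ᶜ} =
      {s | G.IsIndepSet s} ∩ {s | v ∉ s} := by
    ext s; simp [Set.subset_compl_singleton_iff]
  have hin : {s : Set V | G.IsIndepSet s} \ {s | v ∉ s} =
      insert v '' {s | G.IsIndepSet s ∧ s ⊆ (insert v (G.neighborSet v))ᶜ} := by
    ext s
    simp only [Set.mem_sdiff, Set.mem_ofPred_eq, not_not, Set.mem_image,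
      subset_compl_insert_neighborSet_iff]
    constructor
    · rintro ⟨hs, hv⟩
      rw [← Set.insert_sdiff_self_of_mem hv, isIndepSet_insert] at hs
      exact ⟨s \ {v}, ⟨hs.1, fun h => h.2 rfl, hs.2⟩, Set.insert_sdiff_self_of_mem hv⟩
    · rintro ⟨t, ⟨ht, -, htN⟩, rfl⟩
      exact ⟨isIndepSet_insert.2 ⟨ht, htN⟩, Set.mem_insert v t⟩
  have hinj : Set.InjOn (insert v) {s | G.IsIndepSet s ∧ s ⊆ (insert v (G.neighborSet v))ᶜ} :=
    fun s hs t ht hst => by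
      rw [← Set.insert_sdiff_self_of_notMem (subset_compl_insert_neighborSet_iff.1 hs.2).1, hst,
        Set.insert_sdiff_self_of_notMem (subset_compl_insert_neighborSet_iff.1 ht.2).1]
  rw [numIndepSets_induce, numIndepSets_induce, hout, ← hinj.ncard_image, ← hin,
    Set.ncard_inter_add_ncard_sdiff_eq_ncard, numIndepSets_eq_ncard]

theorem one_le_numIndepSets [Finite V] (G : SimpleGraph V) : 1 ≤ numIndepSets G := by
  rw [numIndepSets_eq_ncard]
  exact (Set.ncard_pos (Set.toFinite _)).2 ⟨∅, Set.pairwise_empty _⟩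

theorem numIndepSets_le_two_pow [Finite V] (G : SimpleGraph V) :
    numIndepSets G ≤ 2 ^ Nat.card V := by
  have := Fintype.ofFinite V
  rw [numIndepSets_eq_ncard, Nat.card_eq_fintype_card, ← Fintype.card_set,
    ← Nat.card_eq_fintype_card]
  exact Set.ncard_le_card _

theorem IsAcyclic.exists_degree_le_one [Fintype V] [DecidableRel G.Adj] [Nonempty V]
    (h : G.IsAcyclic) : ∃ v, G.degree v ≤ 1 := by
  cases subsingleton_or_nontrivial V with
  | inl _ =>
    have := G.degree_lt_card_verts (Classical.arbitrary V)
    have := Fintype.card_le_one_iff_subsingleton.2 ‹Subsingleton V›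
    exact ⟨Classical.arbitrary V, by omega⟩
  | inr _ =>
    classical
    obtain ⟨T, hGT, -, hT⟩ := connected_top.exists_isTree_le_of_le_of_isAcyclic le_top h
    obtain ⟨v, hv⟩ := hT.exists_vert_degree_one_of_nontrivial
    exact ⟨v, hv ▸ G.degree_le_of_le hGT⟩

theorem card_compl_insert_neighborSet [Finite V] (G : SimpleGraph V) (v : V)
    [Fintype (G.neighborSet v)] :
    Nat.card ↥(insert v (G.neighborSet v))ᶜ = Nat.card V - G.degree v - 1 := by
  have hdeg : (G.neighborSet v).ncard = G.degree v := by
    rw [← Nat.card_coe_set_eq, Nat.card_eq_fintype_card, card_neighborSet_eq_degree]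
  rw [Nat.card_coe_set_eq, Set.ncard_compl, Set.ncard_insert_of_notMem G.notMem_neighborSet_self,
    hdeg]
  omega

theorem IsAcyclic.fib_card_add_two_le_numIndepSets [Finite V] (h : G.IsAcyclic) :
    Nat.fib (Nat.card V + 2) ≤ numIndepSets G := by
  induction hn : Nat.card V using Nat.strong_induction_on generalizing V with
  | _ n ih =>
  cases n with
  | zero => exact G.one_le_numIndepSets
  | succ k =>
    classical
    have := Fintype.ofFinite V
    have : Nonempty V := (Nat.card_pos_iff.1 (by omega)).1
    obtain ⟨v, hv⟩ := h.exists_degree_le_one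
    have hdel := ih k (by omega) (h.induce {v}ᶜ) (by rw [Nat.card_compl_singleton, hn]; rfl)
    have hclosed := ih _ (by omega) (h.induce _) (card_compl_insert_neighborSet G v)
    calc Nat.fib (k + 1 + 2) = Nat.fib (k + 2) + Nat.fib (k + 1) := by
          rw [Nat.fib_add_two, add_comm]
      _ ≤ numIndepSets (G.induce {v}ᶜ) + numIndepSets (G.induce (insert v (G.neighborSet v))ᶜ) :=
          add_le_add hdel ((Nat.fib_mono (by omega)).trans hclosed)
      _ = numIndepSets G := (G.numIndepSets_eq_add v).symm

theorem IsTree.numIndepSets_le_two_pow_card_sub_one_add_one [Finite V] (h : G.IsTree) :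
    numIndepSets G ≤ 2 ^ (Nat.card V - 1) + 1 := by
  induction hn : Nat.card V using Nat.strong_induction_on generalizing V with
  | _ n ih =>
  cases subsingleton_or_nontrivial V with
  | inl _ =>
    have : n ≤ 1 := hn ▸ Finite.card_le_one_iff_subsingleton.2 ‹_›
    refine (hn ▸ G.numIndepSets_le_two_pow).trans ?_
    interval_cases n <;> norm_num
  | inr _ =>
    classical
    have := Fintype.ofFinite V
    have : 1 < n := hn ▸ Finite.one_lt_card
    obtain ⟨k, rfl⟩ : ∃ k, n = k + 2 := ⟨n - 2, by omega⟩
    obtain ⟨v, hv⟩ := h.exists_vert_degree_one_of_nontrivial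
    have hdel := ih (k + 1) (by omega)
      ⟨h.connected.induce_compl_singleton_of_degree_eq_one hv, h.isAcyclic.induce {v}ᶜ⟩
      (by rw [Nat.card_compl_singleton, hn]; rfl)
    have hclosed := (G.induce (insert v (G.neighborSet v))ᶜ).numIndepSets_le_two_pow
    rw [card_compl_insert_neighborSet, hn, hv] at hclosed
    calc numIndepSets G
        = numIndepSets (G.induce {v}ᶜ) + numIndepSets (G.induce (insert v (G.neighborSet v))ᶜ) :=
          G.numIndepSets_eq_add v
      _ ≤ (2 ^ k + 1) + 2 ^ k := add_le_add hdel hclosed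
      _ = 2 ^ (k + 2 - 1) + 1 := by rw [show k + 2 - 1 = k + 1 by omega, pow_succ]; ring

end SimpleGraph

theorem stmt2 {V : Type*} [Fintype V] (G : SimpleGraph V) (hT : G.IsTree) (n : ℕ)
    (hn : Fintype.card V = n) :
    Nat.fib (n + 2) ≤ numIndepSets G ∧ numIndepSets G ≤ 2 ^ (n - 1) + 1 := by
  rw [← hn, ← Nat.card_eq_fintype_card]
  exact ⟨hT.isAcyclic.fib_card_add_two_le_numIndepSets,
    hT.numIndepSets_le_two_pow_card_sub_one_add_one⟩
end

section
/- For a tree T on n vertices, i(T) = 2^{n-1} + 1 if and only if T is isomorphic to the star K_{1,n-1}. -/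
/-!
A star has as independent sets all sets of leaves, together with the centre alone: 2^{n-1} + 1 of
them. Conversely, if no vertex is adjacent to all others, a connected graph contains a path
a - b - c - d: take b of maximum degree and an edge c - d leaving the closed neighbourhood of b;
then deg b ≥ deg c ≥ 2 yields a. Only 8 of the 16 traces of a set on {a, b, c, d} are
independent in this path, so there are at most 8 · 2^{n-4} = 2^{n-1} independent sets. Finally,
a tree with a vertex r adjacent to all others is the star centred at r, as any other edge would
close a triangle with r.
-/

open SimpleGraph

open Finset

namespace SimpleGraph

variable {V W : Type*} {G : SimpleGraph V}

lemma numIndepSets_congr {H : SimpleGraph W} (e : G ≃g H) : numIndepSets G = numIndepSets H :=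
  Nat.card_congr <| (Equiv.Set.congr e.toEquiv).subtypeEquiv fun s ↦ by
    simp [e.map_adj_iff]

lemma numIndepSets_eq_card [Fintype V] [DecidableRel G.Adj] :
    numIndepSets G = #{s : Finset V | ∀ u ∈ s, ∀ v ∈ s, ¬ G.Adj u v} := by
  rw [numIndepSets, ← Fintype.card_subtype, ← Nat.card_eq_fintype_card]
  exact Nat.card_congr (Fintype.finsetEquivSet.subtypeEquiv fun s ↦ by simp).symm

lemma numIndepSets_starGraph [Fintype V] [DecidableEq V] (r : V) :
    numIndepSets (starGraph r) = 2 ^ (Fintype.card V - 1) + 1 := by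
  rw [numIndepSets_eq_card]
  suffices hindep : ({s | ∀ u ∈ s, ∀ v ∈ s, ¬ (starGraph r).Adj u v} : Finset (Finset V)) =
      insert {r} (univ.erase r).powerset by
    convert (congrArg card hindep).trans ?_
    rw [card_insert_of_notMem, card_powerset, card_erase_of_mem (mem_univ r), card_univ]
    simp [subset_erase]
  ext s
  simp only [mem_filter, mem_univ, true_and, mem_insert, mem_powerset, starGraph_adj]
  constructor
  · intro hs
    by_cases hr : r ∈ s
    · exact .inl <| eq_singleton_iff_unique_mem.2 ⟨hr, fun u hu ↦ by_contra fun hur ↦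
        hs u hu r hr ⟨hur, .inr rfl⟩ |>.elim⟩
    · exact .inr fun u hu ↦ mem_erase.2 ⟨fun h ↦ hr (h ▸ hu), mem_univ u⟩
  · rintro (rfl | hs) u hu v hv ⟨huv, huv'⟩
    · simp_all
    · rcases huv' with rfl | rfl
      · simpa using hs hu
      · simpa using hs hv

noncomputable def starGraphIsoCompleteBipartiteGraph [Fintype V] [DecidableEq V] (r : V) :
    starGraph r ≃g completeBipartiteGraph (Fin 1) (Fin (Fintype.card V - 1)) :=
  let e : V ≃ Fin 1 ⊕ Fin (Fintype.card V - 1) :=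
    (Equiv.sumCompl (· = r)).symm.trans <| Equiv.sumCongr
      (Fintype.equivFinOfCardEq (Fintype.card_subtype_eq r))
      (Fintype.equivFinOfCardEq (by rw [Fintype.card_subtype_compl, Fintype.card_subtype_eq]))
  have he : ∀ v, (e v).isLeft ↔ v = r := fun v ↦ by
    by_cases hv : v = r
    · simp [e, hv]
    · simp [e, Equiv.sumCompl_symm_apply_of_neg (p := (· = r)) hv, hv]
  ⟨e, fun {u v} ↦ by
    simp only [completeBipartiteGraph_adj, ← Sum.not_isLeft, he, starGraph_adj]
    grind⟩

lemma IsAcyclic.eq_starGraph_of_isUniversal (hG : G.IsAcyclic) {r : V} (hr : G.IsUniversal r) :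
    G = starGraph r := by
  classical
  ext u v
  rw [starGraph_adj]
  refine ⟨fun huv ↦ ⟨huv.ne, ?_⟩, ?_⟩
  · by_contra! h
    exact hG.cliqueFree le_rfl {r, u, v}
      (is3Clique_triple_iff.2 ⟨hr (Ne.symm h.1), hr (Ne.symm h.2), huv⟩)
  · rintro ⟨huv, rfl | rfl⟩
    · exact hr huv
    · exact (hr huv.symm).symm

lemma Connected.exists_adj_adj_adj_of_forall_not_isUniversal [Finite V] (hG : G.Connected)
    (h : ∀ v, ¬ G.IsUniversal v) :
    ∃ a b c d, G.Adj a b ∧ G.Adj b c ∧ G.Adj c d ∧ a ≠ c ∧ b ≠ d ∧ a ≠ d := by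
  classical
  have := Fintype.ofFinite V
  have := hG.nonempty
  obtain ⟨b, hb⟩ := Finite.exists_max fun v ↦ G.degree v
  obtain ⟨x, hbx, hx⟩ : ∃ x, b ≠ x ∧ ¬ G.Adj b x := by simpa [IsUniversal] using h b
  obtain ⟨⟨⟨c, d⟩, hcd⟩, -, hc, hd⟩ := (hG.preconnected b x).some.exists_boundary_dart
    {v | v = b ∨ G.Adj b v} (.inl rfl) (by simp [hbx.symm, hx])
  simp only [Set.mem_ofPred_eq, not_or] at hc hd
  have hbc : G.Adj b c := hc.resolve_left fun h ↦ hd.2 (h ▸ hcd)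
  have hdeg : 1 < G.degree c :=
    one_lt_card.2 ⟨b, by simp [hbc.symm], d, by simp [hcd], Ne.symm hd.1⟩
  obtain ⟨a, ha, hac⟩ := exists_mem_ne (hdeg.trans_le (hb c)) c
  rw [mem_neighborFinset] at ha
  exact ⟨a, b, c, d, ha.symm, hbc, hcd, hac, Ne.symm hd.1, fun had ↦ hd.2 (had ▸ ha)⟩

lemma numIndepSets_le_of_adj_adj_adj [Fintype V] {a b c d : V} (hab : G.Adj a b)
    (hbc : G.Adj b c) (hcd : G.Adj c d) (hac : a ≠ c) (hbd : b ≠ d) (had : a ≠ d) :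
    numIndepSets G ≤ 2 ^ (Fintype.card V - 1) := by
  classical
  set Q : Finset V := {a, b, c, d}
  have hQ : #Q = 4 := by simp [Q, hab.ne, hbc.ne, hcd.ne, hac, hbd, had]
  have hQle : 4 ≤ Fintype.card V := hQ ▸ card_le_univ Q
  let P : Finset (Bool × Bool × Bool × Bool) :=
    {p | !(p.1 && p.2.1) && !(p.2.1 && p.2.2.1) && !(p.2.2.1 && p.2.2.2)}
  have hP : #P = 8 := by decide
  let f : Finset V → (Bool × Bool × Bool × Bool) × Finset V :=
    fun s ↦ ((a ∈ s, b ∈ s, c ∈ s, d ∈ s), s \ Q)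
  rw [numIndepSets_eq_card]
  refine (card_le_card_of_injOn (t := P ×ˢ Qᶜ.powerset) f (fun s hs ↦ ?_)
    fun s _ t _ hst ↦ ?_).trans_eq ?_
  · simp only [coe_filter, mem_univ, true_and, Set.mem_ofPred_eq] at hs
    simp only [f, P, mem_coe, mem_product, mem_filter, mem_univ, true_and, mem_powerset]
    refine ⟨?_, fun x hx ↦ ?_⟩
    · simp only [Bool.and_eq_true, Bool.not_eq_true', Bool.and_eq_false_iff,
        decide_eq_false_iff_not]
      exact ⟨⟨not_and_or.1 fun h ↦ hs a h.1 b h.2 hab,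
        not_and_or.1 fun h ↦ hs b h.1 c h.2 hbc⟩, not_and_or.1 fun h ↦ hs c h.1 d h.2 hcd⟩
    · exact mem_compl.2 (mem_sdiff.1 hx).2
  · simp only [f, Prod.mk.injEq, decide_eq_decide] at hst
    ext x
    by_cases hx : x ∈ Q
    · simp only [Q, mem_insert, mem_singleton] at hx
      rcases hx with rfl | rfl | rfl | rfl <;> tauto
    · simpa [hx] using congrArg (x ∈ ·) hst.2
  · obtain ⟨k, hk⟩ := Nat.exists_eq_add_of_le' hQle
    rw [card_product, hP, card_powerset, card_compl, hQ, hk, Nat.add_sub_cancel,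
      show k + 4 - 1 = k + 3 by omega, pow_add]
    norm_num [mul_comm]

end SimpleGraph

theorem stmt3 {V : Type*} [Fintype V] (G : SimpleGraph V) (hT : G.IsTree) (n : ℕ)
    (hn : Fintype.card V = n) :
    numIndepSets G = 2 ^ (n - 1) + 1 ↔
      Nonempty (G ≃g completeBipartiteGraph (Fin 1) (Fin (n - 1))) := by
  classical
  subst hn
  constructor
  · intro hcount
    obtain ⟨r, hr⟩ : ∃ r, G.IsUniversal r := by
      by_contra! h
      obtain ⟨a, b, c, d, hab, hbc, hcd, hac, hbd, had⟩ :=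
        hT.connected.exists_adj_adj_adj_of_forall_not_isUniversal h
      have := numIndepSets_le_of_adj_adj_adj hab hbc hcd hac hbd had
      omega
    rw [hT.isAcyclic.eq_starGraph_of_isUniversal hr]
    exact ⟨starGraphIsoCompleteBipartiteGraph r⟩
  · rintro ⟨φ⟩
    obtain ⟨r⟩ := hT.connected.nonempty
    rw [numIndepSets_congr φ, ← numIndepSets_congr (starGraphIsoCompleteBipartiteGraph r),
      numIndepSets_starGraph]
end

section
/- Let k ≥ 3 and n ≥ k be integers, and let H_{n,k} be the unicyclic graph obtained by attaching n−k pendant leaves to one vertex of a cycle of length k. Then i(H_{n,k}) = F_{k-1} + 2^{n-k} F_{k+1}. -/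
open SimpleGraph

/-- The unicyclic graph obtained by attaching `n - k` pendant leaves to vertex `0` of a
cycle of length `k` (vertices `0, …, k-1` form the cycle; vertices `k, …, n-1` are leaves). -/
def Hgraph (n k : ℕ) : SimpleGraph (Fin n) :=
  SimpleGraph.fromRel (fun u v =>
    (u.val < k ∧ v.val < k ∧ (u.val + 1) % k = v.val) ∨ (u.val = 0 ∧ k ≤ v.val))


def NoConsec (s : Finset ℕ) : Prop := ∀ i ∈ s, i + 1 ∉ s

instance : DecidablePred NoConsec := fun s => by unfold NoConsec; infer_instance

def ncCount (m : ℕ) : ℕ := ((Finset.range m).powerset.filter NoConsec).card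

lemma ncCount_zero : ncCount 0 = 1 := by decide
lemma ncCount_one : ncCount 1 = 2 := by decide

lemma ncCount_step (m : ℕ) : ncCount (m + 2) = ncCount (m + 1) + ncCount m := by
  classical
  unfold ncCount
  rw [← Finset.card_filter_add_card_filter_not (p := fun s => (m+1) ∉ s)
    (s := (Finset.range (m+2)).powerset.filter NoConsec)]
  congr 1
  · -- sets not containing m+1
    rw [Finset.filter_filter]
    apply Finset.card_bij (fun s _ => s)
    · intro s hs
      simp only [Finset.mem_filter, Finset.mem_powerset] at hs ⊢
      obtain ⟨hsub, hnc, hmem⟩ := hs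
      refine ⟨?_, hnc⟩
      intro x hx
      have := hsub hx
      simp only [Finset.mem_range] at this ⊢
      rcases Nat.lt_succ_iff_lt_or_eq.mp this with h | h
      · exact h
      · exact absurd (h ▸ hx) hmem
    · intro a _ b _ h; exact h
    · intro b hb
      simp only [Finset.mem_filter, Finset.mem_powerset] at hb
      obtain ⟨hsub, hnc⟩ := hb
      refine ⟨b, ?_, rfl⟩
      simp only [Finset.mem_filter, Finset.mem_powerset]
      refine ⟨hsub.trans (by intro x; simp only [Finset.mem_range]; omega), hnc, ?_⟩
      intro h
      have := hsub h
      simp at this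
  · -- sets containing m+1
    rw [Finset.filter_filter]
    apply Finset.card_bij (fun s _ => s.erase (m+1))
    · intro s hs
      simp only [Finset.mem_filter, Finset.mem_powerset, not_not] at hs ⊢
      obtain ⟨hsub, hnc, hmem⟩ := hs
      constructor
      · intro x hx
        rw [Finset.mem_erase] at hx
        have h1 := hsub hx.2
        simp only [Finset.mem_range] at h1 ⊢
        -- x ≠ m+1, x < m+2; also x ≠ m since NoConsec and m+1 ∈ s
        have hxm : x ≠ m := by
          intro h; exact hnc x hx.2 (h ▸ hmem)
        omega
      · intro i hi
        rw [Finset.mem_erase] at hi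
        intro hc
        rw [Finset.mem_erase] at hc
        exact hnc i hi.2 hc.2
    · intro a ha b hb h
      simp only [Finset.mem_filter, not_not] at ha hb
      have : insert (m+1) (a.erase (m+1)) = insert (m+1) (b.erase (m+1)) := by rw [h]
      rwa [Finset.insert_erase ha.2.2, Finset.insert_erase hb.2.2] at this
    · intro b hb
      simp only [Finset.mem_filter, Finset.mem_powerset] at hb
      obtain ⟨hsub, hnc⟩ := hb
      refine ⟨insert (m+1) b, ?_, ?_⟩
      · simp only [Finset.mem_filter, Finset.mem_powerset, not_not]
        have hmb : m + 1 ∉ b := fun h => by have := hsub h; simp at this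
        refine ⟨?_, ?_, Finset.mem_insert_self _ _⟩
        · intro x hx
          rcases Finset.mem_insert.mp hx with h | h
          · simp [h]
          · have := hsub h; simp only [Finset.mem_range] at this ⊢; omega
        · intro i hi hc
          rcases Finset.mem_insert.mp hi with h | h
          · rcases Finset.mem_insert.mp hc with h2 | h2
            · omega
            · have := hsub h2; simp only [Finset.mem_range] at this; omega
          · rcases Finset.mem_insert.mp hc with h2 | h2
            · have := hsub h; simp only [Finset.mem_range] at this; omega
            · exact hnc i h h2
      · rw [Finset.erase_insert]
        intro h; have := hsub h; simp at this

lemma ncCount_eq_fib (m : ℕ) : ncCount m = Nat.fib (m + 2) := by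
  induction m using Nat.strong_induction_on with
  | _ m ih =>
    match m with
    | 0 => exact ncCount_zero
    | 1 => exact ncCount_one
    | (m+2) =>
      rw [ncCount_step, ih (m+1) (by omega), ih m (by omega)]
      rw [Nat.fib_add_two (n := m + 2)]
      ring_nf

/-- value-level adjacency -/
def AdjV (k a b : ℕ) : Prop :=
  (a < k ∧ b < k ∧ (a+1 = b ∨ b+1 = a ∨ (a = 0 ∧ b = k-1) ∨ (b = 0 ∧ a = k-1)))
  ∨ (a = 0 ∧ k ≤ b) ∨ (b = 0 ∧ k ≤ a)

lemma hadj_iff {n k : ℕ} (hk : 3 ≤ k) (u v : Fin n) :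
    (Hgraph n k).Adj u v ↔ AdjV k u.val v.val := by
  have hmod : ∀ a b : ℕ, a < k → b < k → ((a+1) % k = b ↔ (a+1 = b ∨ (a = k-1 ∧ b = 0))) := by
    intro a b ha hb
    rcases lt_or_eq_of_le (Nat.succ_le_of_lt ha) with h | h
    · rw [Nat.mod_eq_of_lt h]; omega
    · have h0 : (a+1) % k = 0 := by rw [show a+1 = k from h]; exact Nat.mod_self k
      rw [h0]; omega
  unfold Hgraph
  rw [SimpleGraph.fromRel_adj]
  unfold AdjV
  rw [Ne, Fin.ext_iff]
  constructor
  · rintro ⟨hne, h | h⟩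
    · rcases h with ⟨h1, h2, h3⟩ | ⟨h1, h2⟩
      · rw [hmod _ _ h1 h2] at h3; omega
      · omega
    · rcases h with ⟨h1, h2, h3⟩ | ⟨h1, h2⟩
      · rw [hmod _ _ h1 h2] at h3; omega
      · omega
  · intro h
    have huv : u.val ≠ v.val := by omega
    refine ⟨huv, ?_⟩
    rcases h with ⟨h1, h2, h3⟩ | ⟨h1, h2⟩ | ⟨h1, h2⟩
    · rcases h3 with h3 | h3 | h3 | h3
      · left; left; exact ⟨h1, h2, by rw [hmod _ _ h1 h2]; omega⟩
      · right; left; exact ⟨h2, h1, by rw [hmod _ _ h2 h1]; omega⟩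
      · right; left; exact ⟨h2, h1, by rw [hmod _ _ h2 h1]; omega⟩
      · left; left; exact ⟨h1, h2, by rw [hmod _ _ h1 h2]; omega⟩
    · left; right; exact ⟨h1, h2⟩
    · right; right; exact ⟨h1, h2⟩

open Classical in
lemma numIndepSets_eq {V : Type*} [Fintype V] (G : SimpleGraph V) :
    numIndepSets G
      = (Finset.univ.filter (fun s : Finset V => ∀ u ∈ s, ∀ v ∈ s, ¬ G.Adj u v)).card := by
  classical
  unfold numIndepSets
  rw [Nat.card_eq_fintype_card, ← Fintype.card_subtype]
  exact Fintype.card_congr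
    (Equiv.subtypeEquiv Fintype.finsetEquivSet (by intro s; simp)).symm

lemma countA {n k : ℕ} (hk : 3 ≤ k) (hn : k ≤ n) (z : Fin n) (hz : z.val = 0)
    (F : Finset (Finset (Fin n)))
    (hF : ∀ s, s ∈ F ↔ ((∀ u ∈ s, ∀ v ∈ s, ¬ AdjV k u.val v.val) ∧ z ∈ s)) :
    F.card = Nat.fib (k - 1) := by
  classical
  have hbound : ∀ s ∈ F, ∀ v ∈ s, v ≠ z → 2 ≤ v.val ∧ v.val ≤ k - 2 := by
    intro s hs v hv hvz
    obtain ⟨hind, hzs⟩ := (hF s).mp hs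
    have h := hind z hzs v hv
    have hvz' : v.val ≠ 0 := by
      intro h0; exact hvz (Fin.ext (by rw [h0, hz]))
    have hvn := v.isLt
    rw [hz] at h
    unfold AdjV at h
    omega
  have h1 : F.card = ncCount (k - 3) := by
    unfold ncCount
    apply Finset.card_bij (fun s _ => (s.erase z).image (fun v => v.val - 2))
    · -- maps into target
      intro s hs
      simp only [Finset.mem_filter, Finset.mem_powerset]
      obtain ⟨hind, hzs⟩ := (hF s).mp hs
      constructor
      · intro x hx
        simp only [Finset.mem_image, Finset.mem_erase] at hx
        obtain ⟨v, ⟨hvz, hv⟩, hvx⟩ := hx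
        have := hbound s hs v hv hvz
        simp only [Finset.mem_range]
        omega
      · intro i hi hc
        simp only [Finset.mem_image, Finset.mem_erase] at hi hc
        obtain ⟨u, ⟨huz, hu⟩, hui⟩ := hi
        obtain ⟨v, ⟨hvz, hv⟩, hvi⟩ := hc
        have hub := hbound s hs u hu huz
        have hvb := hbound s hs v hv hvz
        have := hind u hu v hv
        simp only [AdjV] at this
        omega
    · -- injective
      intro a ha b hb hab
      have key : ∀ s t, s ∈ F → t ∈ F →
          (s.erase z).image (fun v : Fin n => v.val - 2) = (t.erase z).image (fun v : Fin n => v.val - 2) →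
          s ⊆ t := by
        intro s t hs ht hst x hx
        by_cases hxz : x = z
        · rw [hxz]; exact ((hF t).mp ht).2
        · have hxb := hbound s hs x hx hxz
          have : x.val - 2 ∈ (t.erase z).image (fun v : Fin n => v.val - 2) := by
            rw [← hst]
            simp only [Finset.mem_image, Finset.mem_erase]
            exact ⟨x, ⟨hxz, hx⟩, rfl⟩
          simp only [Finset.mem_image, Finset.mem_erase] at this
          obtain ⟨y, ⟨hyz, hy⟩, hyx⟩ := this
          have hyb := hbound t ht y hy hyz
          have : y = x := Fin.ext (by omega)
          rwa [← this]
      exact Finset.Subset.antisymm (key a b ha hb hab) (key b a hb ha hab.symm)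
    · -- surjective
      intro t ht
      simp only [Finset.mem_filter, Finset.mem_powerset] at ht
      obtain ⟨hsub, hnc⟩ := ht
      have hmem : ∀ m ∈ t, m + 2 < n := by
        intro m hm; have := hsub hm; simp only [Finset.mem_range] at this; omega
      refine ⟨insert z (t.attach.image (fun m => (⟨m.val + 2, hmem m.val m.prop⟩ : Fin n))), ?_, ?_⟩
      · rw [hF]
        refine ⟨?_, Finset.mem_insert_self _ _⟩
        intro u hu v hv
        simp only [Finset.mem_insert, Finset.mem_image, Finset.mem_attach, true_and,
          Subtype.exists] at hu hv
        have hrange : ∀ m, m ∈ t → m < k - 3 := by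
          intro m hm; have := hsub hm; simpa using this
        rcases hu with hu | ⟨mu, hmu, hmu2⟩ <;> rcases hv with hv | ⟨mv, hmv, hmv2⟩ <;>
          intro hadj <;> simp only [AdjV] at hadj
        · subst hu hv; simp [hz] at hadj; omega
        · subst hu; have := hrange mv hmv
          have : v.val = mv + 2 := by rw [← hmv2]
          simp only [hz] at hadj; omega
        · subst hv; have := hrange mu hmu
          have : u.val = mu + 2 := by rw [← hmu2]
          simp only [hz] at hadj; omega
        · have h1 := hrange mu hmu
          have h2 := hrange mv hmv
          have e1 : u.val = mu + 2 := by rw [← hmu2]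
          have e2 : v.val = mv + 2 := by rw [← hmv2]
          have hcons : mv = mu + 1 ∨ mu = mv + 1 := by omega
          rcases hcons with h | h
          · exact hnc mu hmu (h ▸ hmv)
          · exact hnc mv hmv (h ▸ hmu)
      · rw [Finset.erase_insert, Finset.image_image]
        · ext m
          simp only [Finset.mem_image, Finset.mem_attach, true_and, Subtype.exists,
            Function.comp_apply]
          constructor
          · rintro ⟨a, ha, rfl⟩; simpa using ha
          · intro hm; exact ⟨m, hm, by simp⟩
        · simp only [Finset.mem_image, Finset.mem_attach, true_and, Subtype.exists]
          rintro ⟨a, ha, hc⟩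
          have : z.val = a + 2 := by rw [← hc]
          omega
  rw [h1, ncCount_eq_fib]
  congr 1
  omega

lemma countB {n k : ℕ} (hk : 3 ≤ k) (hn : k ≤ n) (z : Fin n) (hz : z.val = 0)
    (F : Finset (Finset (Fin n)))
    (hF : ∀ s, s ∈ F ↔ ((∀ u ∈ s, ∀ v ∈ s, ¬ AdjV k u.val v.val) ∧ z ∉ s)) :
    F.card = 2 ^ (n - k) * Nat.fib (k + 1) := by
  classical
  have hne0 : ∀ s ∈ F, ∀ v ∈ s, 1 ≤ v.val := by
    intro s hs v hv
    obtain ⟨hind, hzs⟩ := (hF s).mp hs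
    rcases Nat.eq_zero_or_pos v.val with h0 | h1
    · exact absurd hv (by rwa [show v = z from Fin.ext (by rw [h0, hz])])
    · exact h1
  have h1 : F.card = (((Finset.range (k-1)).powerset.filter NoConsec) ×ˢ
      (Finset.range (n-k)).powerset).card := by
    apply Finset.card_bij (fun s _ =>
      (((s.filter (fun v => v.val < k)).image (fun v => v.val - 1)),
       ((s.filter (fun v => ¬ v.val < k)).image (fun v => v.val - k))))
    · -- maps into target
      intro s hs
      obtain ⟨hind, hzs⟩ := (hF s).mp hs
      simp only [Finset.mem_product, Finset.mem_filter, Finset.mem_powerset]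
      refine ⟨⟨?_, ?_⟩, ?_⟩
      · intro x hx
        simp only [Finset.mem_image, Finset.mem_filter] at hx
        obtain ⟨v, ⟨hv, hvk⟩, hvx⟩ := hx
        have := hne0 s hs v hv
        simp only [Finset.mem_range]
        omega
      · intro i hi hc
        simp only [Finset.mem_image, Finset.mem_filter] at hi hc
        obtain ⟨u, ⟨hu, huk⟩, hui⟩ := hi
        obtain ⟨v, ⟨hv, hvk⟩, hvi⟩ := hc
        have h1 := hne0 s hs u hu
        have h2 := hne0 s hs v hv
        have := hind u hu v hv
        unfold AdjV at this
        omega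
      · intro x hx
        simp only [Finset.mem_image, Finset.mem_filter] at hx
        obtain ⟨v, ⟨hv, hvk⟩, hvx⟩ := hx
        have := v.isLt
        simp only [Finset.mem_range]
        omega
    · -- injective
      intro a ha b hb hab
      rw [Prod.mk.injEq] at hab
      obtain ⟨hab1, hab2⟩ := hab
      have key : ∀ s t, s ∈ F → t ∈ F →
          (s.filter (fun v : Fin n => v.val < k)).image (fun v => v.val - 1)
            = (t.filter (fun v : Fin n => v.val < k)).image (fun v => v.val - 1) →
          (s.filter (fun v : Fin n => ¬ v.val < k)).image (fun v => v.val - k)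
            = (t.filter (fun v : Fin n => ¬ v.val < k)).image (fun v => v.val - k) →
          s ⊆ t := by
        intro s t hs ht h1 h2 x hx
        have hx1 := hne0 s hs x hx
        by_cases hxk : x.val < k
        · have : x.val - 1 ∈ (t.filter (fun v : Fin n => v.val < k)).image (fun v => v.val - 1) := by
            rw [← h1]
            simp only [Finset.mem_image, Finset.mem_filter]
            exact ⟨x, ⟨hx, hxk⟩, rfl⟩
          simp only [Finset.mem_image, Finset.mem_filter] at this
          obtain ⟨y, ⟨hy, hyk⟩, hyx⟩ := this
          have := hne0 t ht y hy
          have : y = x := Fin.ext (by omega)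
          rwa [← this]
        · have : x.val - k ∈ (t.filter (fun v : Fin n => ¬ v.val < k)).image (fun v => v.val - k) := by
            rw [← h2]
            simp only [Finset.mem_image, Finset.mem_filter]
            exact ⟨x, ⟨hx, hxk⟩, rfl⟩
          simp only [Finset.mem_image, Finset.mem_filter] at this
          obtain ⟨y, ⟨hy, hyk⟩, hyx⟩ := this
          have : y = x := Fin.ext (by omega)
          rwa [← this]
      exact Finset.Subset.antisymm (key a b ha hb hab1 hab2) (key b a hb ha hab1.symm hab2.symm)
    · -- surjective
      rintro ⟨t, u⟩ htu
      simp only [Finset.mem_product, Finset.mem_filter, Finset.mem_powerset] at htu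
      obtain ⟨⟨htsub, htnc⟩, husub⟩ := htu
      have htmem : ∀ m ∈ t, m + 1 < n := by
        intro m hm; have := htsub hm; simp only [Finset.mem_range] at this; omega
      have humem : ∀ m ∈ u, m + k < n := by
        intro m hm; have := husub hm; simp only [Finset.mem_range] at this; omega
      set s : Finset (Fin n) :=
        (t.attach.image (fun m => (⟨m.val + 1, htmem m.val m.prop⟩ : Fin n))) ∪
        (u.attach.image (fun m => (⟨m.val + k, humem m.val m.prop⟩ : Fin n))) with hs
      have hmem_s : ∀ v : Fin n, v ∈ s ↔
          ((v.val < k ∧ 1 ≤ v.val ∧ v.val - 1 ∈ t) ∨ (k ≤ v.val ∧ v.val - k ∈ u)) := by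
        intro v
        rw [hs]
        simp only [Finset.mem_union, Finset.mem_image, Finset.mem_attach, true_and,
          Subtype.exists]
        constructor
        · rintro (⟨m, hm, hv⟩ | ⟨m, hm, hv⟩)
          · have hv' : v.val = m + 1 := by rw [← hv]
            have := htsub hm; simp only [Finset.mem_range] at this
            left; refine ⟨by omega, by omega, ?_⟩
            rw [show v.val - 1 = m by omega]; exact hm
          · have hv' : v.val = m + k := by rw [← hv]
            right; refine ⟨by omega, ?_⟩
            rw [show v.val - k = m by omega]; exact hm
        · rintro (⟨h1, h2, h3⟩ | ⟨h1, h2⟩)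
          · left; exact ⟨v.val - 1, h3, Fin.ext (by simp; omega)⟩
          · right; exact ⟨v.val - k, h2, Fin.ext (by simp; omega)⟩
      refine ⟨s, ?_, ?_⟩
      · rw [hF]
        constructor
        · intro a ha b hb hadj
          rw [hmem_s] at ha hb
          unfold AdjV at hadj
          have hcons : (a.val < k ∧ b.val < k ∧ (a.val + 1 = b.val ∨ b.val + 1 = a.val)) := by
            rcases ha with ⟨h1, h2, _⟩ | ⟨h1, _⟩ <;> rcases hb with ⟨g1, g2, _⟩ | ⟨g1, _⟩ <;> omega
          obtain ⟨ha1, ha2, ha3⟩ := ha.resolve_right (by omega)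
          obtain ⟨hb1, hb2, hb3⟩ := hb.resolve_right (by omega)
          rcases hcons.2.2 with h | h
          · exact htnc (a.val - 1) ha3 (by rw [show a.val - 1 + 1 = b.val - 1 by omega]; exact hb3)
          · exact htnc (b.val - 1) hb3 (by rw [show b.val - 1 + 1 = a.val - 1 by omega]; exact ha3)
        · intro hzs
          rw [hmem_s] at hzs
          rw [hz] at hzs
          omega
      · rw [Prod.mk.injEq]
        constructor
        · ext m
          simp only [Finset.mem_image, Finset.mem_filter]
          constructor
          · rintro ⟨v, ⟨hv, hvk⟩, hvm⟩
            rw [hmem_s] at hv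
            rcases hv with ⟨h1, h2, h3⟩ | ⟨h1, h2⟩
            · rwa [← hvm]
            · omega
          · intro hm
            have hmk : m < k - 1 := by have := htsub hm; simpa using this
            refine ⟨⟨m + 1, by omega⟩, ⟨?_, by simp; omega⟩, by simp⟩
            rw [hmem_s]
            left
            simp only
            exact ⟨by omega, by omega, by rw [show m + 1 - 1 = m by omega]; exact hm⟩
        · ext m
          simp only [Finset.mem_image, Finset.mem_filter]
          constructor
          · rintro ⟨v, ⟨hv, hvk⟩, hvm⟩
            rw [hmem_s] at hv
            rcases hv with ⟨h1, h2, h3⟩ | ⟨h1, h2⟩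
            · omega
            · rwa [← hvm]
          · intro hm
            have hmk : m < n - k := by have := husub hm; simpa using this
            refine ⟨⟨m + k, by omega⟩, ⟨?_, by simp⟩, by simp⟩
            rw [hmem_s]
            right
            simp only
            exact ⟨by omega, by rw [show m + k - k = m by omega]; exact hm⟩
  rw [h1, Finset.card_product, Finset.card_powerset, Finset.card_range]
  have : (((Finset.range (k-1)).powerset.filter NoConsec)).card = Nat.fib (k+1) := by
    have := ncCount_eq_fib (k-1)
    unfold ncCount at this
    rw [this]
    congr 1
    omega
  rw [this, Nat.mul_comm]

theorem stmt6 (n k : ℕ) (hk : 3 ≤ k) (hn : k ≤ n) :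
    numIndepSets (Hgraph n k) = Nat.fib (k - 1) + 2 ^ (n - k) * Nat.fib (k + 1) := by
  classical
  have hn0 : 0 < n := by omega
  set z : Fin n := ⟨0, hn0⟩ with hzdef
  have hz : z.val = 0 := rfl
  have hIndep : ∀ s : Finset (Fin n),
      (∀ u ∈ s, ∀ v ∈ s, ¬ (Hgraph n k).Adj u v) ↔ (∀ u ∈ s, ∀ v ∈ s, ¬ AdjV k u.val v.val) := by
    intro s
    constructor <;> intro h u hu v hv <;> have := h u hu v hv <;>
      rw [hadj_iff hk] at * <;> tauto
  rw [numIndepSets_eq]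
  rw [← Finset.card_filter_add_card_filter_not (p := fun s => z ∈ s)]
  congr 1
  · apply countA hk hn z hz
    intro s
    simp only [Finset.mem_filter, Finset.mem_univ, true_and]
    rw [hIndep s]
  · apply countB hk hn z hz
    intro s
    simp only [Finset.mem_filter, Finset.mem_univ, true_and]
    rw [hIndep s]
end

section
/- If G is a unicyclic graph of order n whose unique cycle has length k, then i(G) ≤ 2^{n-k} F_{k+1} + F_{k-1}. -/
open SimpleGraph

/-!
Write `i(A)` for the number of independent sets of `G` contained in a vertex set `A`. Splitting
on a vertex `v` gives `i(A ∪ {v}) ≤ i(A) + i(A \ N(v))`, whence `i(P_m) ≤ F_{m+2}` for a path on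
`m` vertices and `i(C_k) ≤ F_{k+1} + F_{k-1}` for a `k`-cycle, with `i(C_k - w) ≤ F_{k+1}`.
Starting from a shortest cycle `C` and using connectivity, add the remaining vertices one at a
time, each new vertex `r` adjacent to some `w` already present. Then
`i(A ∪ {r}) ≤ i(A) + i(A - w)` and `i(A - w) ≤ 2^{|A \ C|} F_{k+1}` (if `w ∉ C` this uses
`F_{k-1} ≤ F_{k+1}`), so `i(A) ≤ 2^{|A \ C|} F_{k+1} + F_{k-1}` is preserved.
-/

open Finset

namespace SimpleGraph

variable {V : Type*} {G : SimpleGraph V}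

lemma Walk.IsCycle.adj_getVert_mod {a : V} {c : G.Walk a a} (hc : c.IsCycle) (i : ℕ) :
    G.Adj (c.getVert (i % c.length)) (c.getVert ((i + 1) % c.length)) := by
  have hi := Nat.mod_lt i (show 0 < c.length by have := hc.three_le_length; omega)
  suffices c.getVert ((i + 1) % c.length) = c.getVert (i % c.length + 1) from
    this ▸ c.adj_getVert_succ hi
  rw [← Nat.mod_add_mod]
  rcases (show i % c.length + 1 < c.length ∨ i % c.length + 1 = c.length by omega) with h | h
  · rw [Nat.mod_eq_of_lt h]
  · rw [h, Nat.mod_self, c.getVert_zero, c.getVert_length]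

variable [DecidableEq V]

lemma Walk.IsCycle.card_image_range_getVert_mod {a : V} {c : G.Walk a a} (hc : c.IsCycle) :
    #((range c.length).image fun i => c.getVert (i % c.length)) = c.length := by
  refine (card_image_of_injOn fun i hi j hj hij => ?_).trans (card_range _)
  simp only [coe_range, Set.mem_Iio] at hi hj
  simp only [Nat.mod_eq_of_lt hi, Nat.mod_eq_of_lt hj] at hij
  exact hc.getVert_injOn' (by simp; omega) (by simp; omega) hij

lemma Connected.induction_insert [Fintype V] (hG : G.Connected) {P : Finset V → Prop}
    {C : Finset V} (hC : C.Nonempty) (h₀ : P C)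
    (step : ∀ A r w, C ⊆ A → P A → r ∉ A → w ∈ A → G.Adj r w → P (insert r A)) :
    P univ := by
  suffices ∀ m A, #Aᶜ = m → C ⊆ A → P A → P univ from this _ C rfl subset_rfl h₀
  intro m
  induction m with
  | zero =>
    intro A hA _ hPA
    rw [card_eq_zero, compl_eq_empty_iff] at hA
    exact hA ▸ hPA
  | succ m ih =>
    intro A hA hCA hPA
    obtain ⟨r₀, hr₀⟩ := card_pos.mp (hA ▸ m.succ_pos : 0 < #Aᶜ)
    obtain ⟨c, hc⟩ := hC
    obtain ⟨d, -, hd₁, hd₂⟩ := (hG.preconnected r₀ c).some.exists_boundary_dart (↑Aᶜ)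
      (by simpa using mem_compl.mp hr₀) (by simpa using hCA hc)
    simp only [coe_compl, Set.mem_compl_iff, mem_coe, not_not] at hd₁ hd₂
    refine ih (insert d.fst A) ?_ (hCA.trans (subset_insert _ _))
      (step A _ _ hCA hPA hd₁ hd₂ d.adj)
    rw [card_compl] at hA ⊢
    rw [card_insert_of_notMem hd₁]
    omega

variable (G) [DecidableRel G.Adj]

def numIndepSetsIn (A : Finset V) : ℕ := #(A.powerset.filter fun s : Finset V => G.IsIndepSet s)

variable {G}

lemma numIndepSets_eq_numIndepSetsIn_univ [Fintype V] :
    numIndepSets G = G.numIndepSetsIn univ := by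
  rw [numIndepSets, numIndepSetsIn, powerset_univ, ← Fintype.card_subtype,
    ← Nat.card_eq_fintype_card]
  refine Nat.card_congr (Fintype.finsetEquivSet.subtypeEquiv fun s => ?_).symm
  exact ⟨fun h u hu v hv huv => h hu hv (G.ne_of_adj huv) huv, fun h u hu v hv _ => h u hu v hv⟩

lemma numIndepSetsIn_empty : G.numIndepSetsIn ∅ = 1 := by
  simp [numIndepSetsIn, filter_singleton]

lemma numIndepSetsIn_mono {A B : Finset V} (h : A ⊆ B) :
    G.numIndepSetsIn A ≤ G.numIndepSetsIn B :=
  card_le_card (filter_subset_filter _ (powerset_mono.mpr h))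

lemma numIndepSetsIn_insert_le (v : V) (A : Finset V) :
    G.numIndepSetsIn (insert v A) ≤
      G.numIndepSetsIn A + G.numIndepSetsIn {u ∈ A | ¬G.Adj v u} := by
  calc G.numIndepSetsIn (insert v A)
      ≤ #(A.powerset.filter (fun s : Finset V => G.IsIndepSet s) ∪
          ({u ∈ A | ¬G.Adj v u}.powerset.filter fun s : Finset V => G.IsIndepSet s).image
            (insert v)) := by
        refine card_le_card fun s hs => ?_
        simp only [mem_filter, mem_powerset] at hs
        by_cases hv : v ∈ s
        · refine mem_union_right _ (mem_image.mpr ⟨s.erase v, ?_, insert_erase hv⟩)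
          simp only [mem_filter, mem_powerset, coe_erase]
          refine ⟨fun u hu => ?_, hs.2.mono Set.sdiff_subset⟩
          have hus := mem_of_mem_erase hu
          refine mem_filter.mpr ⟨?_, hs.2 hv hus (ne_of_mem_erase hu).symm⟩
          exact (mem_insert.mp (hs.1 hus)).resolve_left (ne_of_mem_erase hu)
        · exact mem_union_left _ (mem_filter.mpr
            ⟨mem_powerset.mpr ((subset_insert_iff_of_notMem hv).mp hs.1), hs.2⟩)
    _ ≤ _ := (card_union_le _ _).trans (Nat.add_le_add_left card_image_le _)

lemma numIndepSetsIn_insert_le_two_mul (v : V) (A : Finset V) :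
    G.numIndepSetsIn (insert v A) ≤ 2 * G.numIndepSetsIn A :=
  (numIndepSetsIn_insert_le v A).trans <| by
    linarith [numIndepSetsIn_mono (G := G) (filter_subset (fun u => ¬G.Adj v u) A)]

lemma numIndepSetsIn_le_mul_two_pow {A B : Finset V} (h : B ⊆ A) :
    G.numIndepSetsIn A ≤ G.numIndepSetsIn B * 2 ^ #(A \ B) := by
  suffices ∀ D : Finset V, G.numIndepSetsIn (D ∪ B) ≤ G.numIndepSetsIn B * 2 ^ #D by
    simpa only [sdiff_union_of_subset h] using this (A \ B)
  intro D
  induction D using Finset.induction_on with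
  | empty => simp
  | insert a D ha ih =>
    rw [insert_union, card_insert_of_notMem ha, pow_succ]
    linarith [numIndepSetsIn_insert_le_two_mul (G := G) a (D ∪ B)]

lemma numIndepSetsIn_image_range_le_fib {g : ℕ → V} (hadj : ∀ i, G.Adj (g i) (g (i + 1)))
    (m : ℕ) : G.numIndepSetsIn ((range m).image g) ≤ Nat.fib (m + 2) := by
  induction m using Nat.twoStepInduction with
  | zero => simp [numIndepSetsIn_empty]
  | one =>
    simpa [numIndepSetsIn_empty, show Nat.fib 3 = 2 from rfl] using
      numIndepSetsIn_insert_le_two_mul (G := G) (g 0) ∅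
  | more m ih₀ ih₁ =>
    have hfilter : {u ∈ (range (m + 1)).image g | ¬G.Adj (g (m + 1)) u} ⊆ (range m).image g := by
      intro x hx
      obtain ⟨⟨i, hi, rfl⟩, hnadj⟩ := by simpa only [mem_filter, mem_image, mem_range] using hx
      have him : i ≠ m := by rintro rfl; exact hnadj (hadj i).symm
      exact mem_image_of_mem g (mem_range.mpr (by omega))
    calc G.numIndepSetsIn ((range (m + 2)).image g)
        ≤ G.numIndepSetsIn ((range (m + 1)).image g) + G.numIndepSetsIn ((range m).image g) := by
          rw [range_add_one, image_insert]
          exact (numIndepSetsIn_insert_le _ _).trans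
            (Nat.add_le_add_left (numIndepSetsIn_mono hfilter) _)
      _ ≤ Nat.fib (m + 2 + 2) := by
          rw [Nat.fib_add_two, show m + 2 + 1 = m + 1 + 2 from rfl]
          omega

lemma erase_image_range_subset (g : ℕ → V) (k : ℕ) :
    ((range k).image g).erase (g 0) ⊆ (range (k - 1)).image (fun i => g (i + 1)) := by
  intro x hx
  obtain ⟨hx0, i, hi, rfl⟩ := by simpa only [mem_erase, mem_image, mem_range] using hx
  have hi0 : i ≠ 0 := by rintro rfl; exact hx0 rfl
  exact mem_image.mpr ⟨i - 1, mem_range.mpr (by omega), by rw [Nat.sub_add_cancel (by omega)]⟩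

/-! A cycle of length `k` is handled as a `k`-periodic sequence `g` of vertices with consecutive
terms adjacent, so that it can be entered at any of its vertices by shifting `g`. -/

section Cycle

variable {g : ℕ → V} {k : ℕ}

lemma image_range_subset_image_range_shift (hper : Function.Periodic g k) {j : ℕ} (hj : j < k) :
    (range k).image g ⊆ (range k).image (fun i => g (j + i)) := by
  intro x hx
  obtain ⟨i, hi, rfl⟩ := mem_image.mp hx
  rw [mem_range] at hi
  rw [mem_image]
  by_cases hji : j ≤ i
  · exact ⟨i - j, mem_range.mpr (by omega), by rw [Nat.add_sub_cancel' hji]⟩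
  · exact ⟨i + k - j, mem_range.mpr (by omega), by rw [← hper i]; congr 1; omega⟩

lemma numIndepSetsIn_erase_image_range_le (hadj : ∀ i, G.Adj (g i) (g (i + 1)))
    (hper : Function.Periodic g k) {w : V} (hw : w ∈ (range k).image g) :
    G.numIndepSetsIn (((range k).image g).erase w) ≤ Nat.fib (k + 1) := by
  obtain ⟨j, hj, rfl⟩ := mem_image.mp hw
  rw [mem_range] at hj
  set g' : ℕ → V := fun i => g (j + i)
  have hsub : ((range k).image g).erase (g j) ⊆ (range (k - 1)).image (fun i => g' (i + 1)) :=
    (erase_subset_erase _ (image_range_subset_image_range_shift hper hj)).trans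
      (erase_image_range_subset g' k)
  calc G.numIndepSetsIn (((range k).image g).erase (g j))
      ≤ Nat.fib (k - 1 + 2) :=
        (numIndepSetsIn_mono hsub).trans
          (numIndepSetsIn_image_range_le_fib (fun i => hadj (j + (i + 1))) _)
    _ = Nat.fib (k + 1) := by congr 1; omega

lemma numIndepSetsIn_image_range_le (hadj : ∀ i, G.Adj (g i) (g (i + 1)))
    (hper : Function.Periodic g k) (hk : 3 ≤ k) :
    G.numIndepSetsIn ((range k).image g) ≤ Nat.fib (k + 1) + Nat.fib (k - 1) := by
  set C := (range k).image g
  have hfilter :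
      {u ∈ C.erase (g 0) | ¬G.Adj (g 0) u} ⊆ (range (k - 3)).image (fun i => g (i + 2)) := by
    intro x hx
    obtain ⟨⟨hx0, i, hi, rfl⟩, hnadj⟩ := by
      simpa only [C, mem_filter, mem_erase, mem_image, mem_range] using hx
    have hi0 : i ≠ 0 := by rintro rfl; exact hx0 rfl
    have hi1 : i ≠ 1 := by rintro rfl; exact hnadj (hadj 0)
    have hik : i ≠ k - 1 := by
      rintro rfl
      refine hnadj ?_
      simpa [Nat.sub_add_cancel (show 1 ≤ k by omega), ← hper 0] using (hadj (k - 1)).symm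
    exact mem_image.mpr ⟨i - 2, mem_range.mpr (by omega), by rw [Nat.sub_add_cancel (by omega)]⟩
  have hg0 : g 0 ∈ C := mem_image_of_mem g (mem_range.mpr (by omega))
  calc G.numIndepSetsIn C
      = G.numIndepSetsIn (insert (g 0) (C.erase (g 0))) := by rw [insert_erase hg0]
    _ ≤ Nat.fib (k + 1) + Nat.fib (k - 3 + 2) :=
        (numIndepSetsIn_insert_le _ _).trans <| Nat.add_le_add
          (numIndepSetsIn_erase_image_range_le hadj hper hg0)
          ((numIndepSetsIn_mono hfilter).trans
            (numIndepSetsIn_image_range_le_fib (fun i => hadj (i + 2)) _))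
    _ = Nat.fib (k + 1) + Nat.fib (k - 1) := by congr 2; omega

end Cycle

lemma numIndepSetsIn_erase_le_of_subset {C A : Finset V} {a b : ℕ} (hba : b ≤ a)
    (hC : G.numIndepSetsIn C ≤ a + b) (hCerase : ∀ w ∈ C, G.numIndepSetsIn (C.erase w) ≤ a)
    (hCA : C ⊆ A) {w : V} (hw : w ∈ A) :
    G.numIndepSetsIn (A.erase w) ≤ 2 ^ #(A \ C) * a := by
  by_cases hwC : w ∈ C
  · have hsdiff : A.erase w \ C.erase w = A \ C := by
      ext x
      simp only [mem_sdiff, mem_erase]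
      grind
    calc G.numIndepSetsIn (A.erase w)
        ≤ G.numIndepSetsIn (C.erase w) * 2 ^ #(A.erase w \ C.erase w) :=
          numIndepSetsIn_le_mul_two_pow (erase_subset_erase w hCA)
      _ ≤ 2 ^ #(A \ C) * a := by
          rw [hsdiff, mul_comm]
          exact Nat.mul_le_mul_left _ (hCerase w hwC)
  · have hcard : #(A.erase w \ C) + 1 = #(A \ C) := by
      rw [erase_sdiff_comm, card_erase_add_one (mem_sdiff.mpr ⟨hw, hwC⟩)]
    calc G.numIndepSetsIn (A.erase w)
        ≤ G.numIndepSetsIn C * 2 ^ #(A.erase w \ C) :=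
          numIndepSetsIn_le_mul_two_pow fun x hx =>
            mem_erase.mpr ⟨by rintro rfl; exact hwC hx, hCA hx⟩
      _ ≤ 2 * a * 2 ^ #(A.erase w \ C) := Nat.mul_le_mul_right _ (by omega)
      _ = 2 ^ #(A \ C) * a := by rw [← hcard, pow_succ]; ring

lemma Connected.numIndepSetsIn_univ_le [Fintype V] (hG : G.Connected) {C : Finset V}
    (hCne : C.Nonempty) {a b : ℕ} (hba : b ≤ a) (hC : G.numIndepSetsIn C ≤ a + b)
    (hCerase : ∀ w ∈ C, G.numIndepSetsIn (C.erase w) ≤ a) :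
    G.numIndepSetsIn univ ≤ 2 ^ #Cᶜ * a + b := by
  rw [compl_eq_univ_sdiff]
  refine hG.induction_insert (P := fun A => G.numIndepSetsIn A ≤ 2 ^ #(A \ C) * a + b) hCne
    (by simpa using hC) fun A r w hCA hA hr hw hrw => ?_
  have hfilter : {u ∈ A | ¬G.Adj r u} ⊆ A.erase w := fun u hu => by
    obtain ⟨huA, hru⟩ := mem_filter.mp hu
    exact mem_erase.mpr ⟨by rintro rfl; exact hru hrw, huA⟩
  calc G.numIndepSetsIn (insert r A) ≤ G.numIndepSetsIn A + G.numIndepSetsIn (A.erase w) :=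
        (numIndepSetsIn_insert_le r A).trans (Nat.add_le_add_left (numIndepSetsIn_mono hfilter) _)
    _ ≤ 2 ^ #(insert r A \ C) * a + b := by
        rw [insert_sdiff_of_notMem _ (fun h => hr (hCA h)),
          card_insert_of_notMem (fun h => hr (mem_sdiff.mp h).1), pow_succ]
        linarith [numIndepSetsIn_erase_le_of_subset hba hC hCerase hCA hw]

end SimpleGraph

theorem stmt7_general {V : Type*} [Fintype V] (G : SimpleGraph V) (n k : ℕ)
    (hconn : G.Connected) (hn : Fintype.card V = n)
    (hgirth : G.girth = k) :
    numIndepSets G ≤ 2 ^ (n - k) * Nat.fib (k + 1) + Nat.fib (k - 1) := by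
  classical
  rw [numIndepSets_eq_numIndepSetsIn_univ]
  by_cases hG : G.IsAcyclic
  · obtain rfl : k = 0 := hgirth ▸ hG.girth_eq_zero
    simpa [numIndepSetsIn_empty, hn] using
      numIndepSetsIn_le_mul_two_pow (G := G) (empty_subset univ)
  obtain ⟨a, c, hc, hck⟩ := exists_girth_eq_length.mpr hG
  rw [hgirth] at hck
  subst hck
  have hadj := hc.adj_getVert_mod
  have hper : Function.Periodic (fun i => c.getVert (i % c.length)) c.length := fun i => by
    simp only [Nat.add_mod_right]
  have hk := hc.three_le_length
  have hbound := hconn.numIndepSetsIn_univ_le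
    ⟨_, mem_image_of_mem _ (mem_range.mpr (show 0 < c.length by omega))⟩
    (Nat.fib_mono (by omega)) (numIndepSetsIn_image_range_le hadj hper hk)
    (fun w hw => numIndepSetsIn_erase_image_range_le hadj hper hw)
  rwa [card_compl, hc.card_image_range_getVert_mod, hn] at hbound

theorem stmt7 {V : Type*} [Fintype V] (G : SimpleGraph V) (n k : ℕ)
    (hconn : G.Connected) (hn : Fintype.card V = n)
    (hunicyclic : G.edgeSet.ncard = n) (hgirth : G.girth = k) :
    numIndepSets G ≤ 2 ^ (n - k) * Nat.fib (k + 1) + Nat.fib (k - 1) :=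
  stmt7_general G n k hconn hn hgirth
end

section
/- If G is a connected bipartite graph on n vertices with girth g ≥ 4, then i(G) ≤ 2^{n-g} F_{g+1} + F_{g-1}. -/
open SimpleGraph

/-!
Fix a cycle `C` of length `g` (a shortest one). Deleting a vertex `v` and its neighbourhood gives
`i(W) ≤ i(W - v) + i(W - N[v])`, so a path on `m` vertices has at most `F (m + 2)` independent
sets and the cycle at most `F (g + 1) + F (g - 1)`. By connectivity the other `n - g` vertices can
be added one at a time, each new vertex `u` adjacent to some `w` already present. The new
independent sets contain `u`, hence avoid `w`; splitting them into their traces on `C - w` and on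
the `k` vertices outside `C` bounds their number by `F (g + 1) * 2 ^ k` (if `w ∉ C`, use
`i(C) ≤ 2 F (g + 1)` and one free vertex fewer). Summing the geometric series over
`k = 0, …, n - g - 1` gives the bound.
-/

open Finset
open scoped Classical

namespace SimpleGraph

variable {V : Type*} (G : SimpleGraph V)

noncomputable def indepCount (W : Finset V) : ℕ :=
  #(W.powerset.filter fun S : Finset V => G.IsIndepSet (S : Set V))

variable {G}

lemma indepCount_mono {W W' : Finset V} (h : W ⊆ W') : G.indepCount W ≤ G.indepCount W' :=
  card_le_card <| filter_subset_filter _ <| powerset_mono.2 h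

lemma indepCount_le_two_pow_card (W : Finset V) : G.indepCount W ≤ 2 ^ #W :=
  (card_filter_le _ _).trans (card_powerset W).le

lemma indepCount_le_erase_add_sdiff {W N : Finset V} {v : V} (hN : ∀ x ∈ N, G.Adj v x) :
    G.indepCount W ≤ G.indepCount (W.erase v) + G.indepCount (W \ insert v N) := by
  rw [indepCount, ← card_filter_add_card_filter_not (p := fun S => v ∉ S)]
  refine add_le_add (card_le_card fun S hS => ?_) (card_le_card_of_injOn (·.erase v) ?_ ?_)
  · simp only [mem_filter, mem_powerset] at hS ⊢
    exact ⟨subset_erase.2 ⟨hS.1.1, hS.2⟩, hS.1.2⟩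
  · intro S hS
    simp only [mem_coe, mem_filter, mem_powerset, not_not] at hS
    obtain ⟨⟨hSW, hS⟩, hvS⟩ := hS
    simp only [coe_filter, mem_powerset, Set.mem_ofPred_eq]
    refine ⟨fun x hx => ?_, hS.mono (coe_subset.2 (erase_subset v S))⟩
    obtain ⟨hxv, hxS⟩ := mem_erase.1 hx
    refine mem_sdiff.2 ⟨hSW hxS, fun hxN => ?_⟩
    rcases mem_insert.1 hxN with rfl | hxN
    · exact hxv rfl
    · exact hS hvS hxS (Ne.symm hxv) (hN x hxN)
  · exact (erase_injOn' v).mono fun S hS => by simp_all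

lemma indepCount_le_inter_mul_two_pow (W C : Finset V) :
    G.indepCount W ≤ G.indepCount (W ∩ C) * 2 ^ #(W \ C) := by
  rw [← card_powerset (W \ C), indepCount, indepCount, ← card_product]
  refine card_le_card_of_injOn (fun S => (S ∩ C, S \ C)) (fun S hS => ?_) fun S _ T _ h => ?_
  · simp only [coe_filter, mem_powerset, Set.mem_ofPred_eq] at hS
    simp only [coe_product, coe_filter, coe_powerset, Set.mem_prod, Set.mem_ofPred_eq, mem_powerset,
      Set.mem_preimage]
    exact ⟨⟨inter_subset_inter_right hS.1, hS.2.mono (coe_subset.2 inter_subset_left)⟩,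
      sdiff_subset_sdiff hS.1 le_rfl⟩
  · obtain ⟨h₁, h₂⟩ := Prod.mk.inj h
    rw [← sdiff_union_inter S C, ← sdiff_union_inter T C, h₁, h₂]

lemma numIndepSets_eq_indepCount_univ [Fintype V] : numIndepSets G = G.indepCount univ := by
  have hindep (s : Set V) : (∀ u ∈ s, ∀ v ∈ s, ¬ G.Adj u v) ↔ G.IsIndepSet s :=
    ⟨fun h u hu v hv _ => h u hu v hv, fun h u hu v hv huv => h hu hv huv.ne huv⟩
  rw [numIndepSets, indepCount, powerset_univ,
    ← Nat.card_congr (Fintype.finsetEquivSet.subtypeEquiv fun S => (hindep S).symm),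
    Nat.card_eq_fintype_card, Fintype.card_subtype]

lemma Connected.exists_adj_of_nonempty_of_ne_univ (hG : G.Connected) {W : Set V}
    (hne : W.Nonempty) (hW : W ≠ Set.univ) : ∃ u ∉ W, ∃ w ∈ W, G.Adj u w := by
  obtain ⟨w, hw⟩ := hne
  obtain ⟨u, hu⟩ := (Set.ne_univ_iff_exists_notMem W).1 hW
  obtain ⟨d, -, hd, hd'⟩ := (hG w u).some.exists_boundary_dart W hw hu
  exact ⟨d.snd, hd', d.fst, hd, d.adj.symm⟩

lemma indepCount_univ_add_le [Fintype V] (hG : G.Connected) {C : Finset V} (hC : C.Nonempty)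
    (a : ℕ) (hstep : ∀ W, C ⊆ W → ∀ u ∉ W, ∀ w ∈ W, G.Adj u w →
      G.indepCount (insert u W) ≤ G.indepCount W + a * 2 ^ #(W \ C)) :
    G.indepCount univ + a ≤ G.indepCount C + a * 2 ^ #Cᶜ := by
  suffices key : ∀ k, ∀ W, C ⊆ W → #Wᶜ = k →
      G.indepCount univ + a * 2 ^ #(W \ C) ≤ G.indepCount W + a * 2 ^ #Cᶜ by
    simpa using key _ C subset_rfl rfl
  intro k
  induction k with
  | zero =>
    intro W _ hW
    rw [card_eq_zero, compl_eq_empty_iff] at hW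
    subst hW
    rw [← compl_eq_univ_sdiff]
  | succ k ih =>
    intro W hCW hW
    have hWu : (W : Set V) ≠ Set.univ := by
      rw [← coe_univ, Ne, coe_inj, ← compl_eq_empty_iff, ← card_eq_zero, hW]
      exact k.succ_ne_zero
    obtain ⟨u, hu, w, hw, huw⟩ :=
      hG.exists_adj_of_nonempty_of_ne_univ (coe_nonempty.2 (hC.mono hCW)) hWu
    have hu' : u ∉ W \ C := fun h => hu (mem_sdiff.1 h).1
    have hrest : #(insert u W)ᶜ = k := by
      rw [compl_insert, card_erase_of_mem (mem_compl.2 hu), hW, Nat.add_sub_cancel]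
    have hgrow := ih (insert u W) (hCW.trans (subset_insert u W)) hrest
    rw [insert_sdiff_of_notMem _ fun h => hu (hCW h), card_insert_of_notMem hu', pow_succ] at hgrow
    have := hstep W hCW u hu w hw huw
    linarith

section Cycle

variable {g : ℕ} {e : ZMod g → V}

noncomputable def arc (e : ZMod g → V) (s : ZMod g) (m : ℕ) : Finset V :=
  (range m).image fun j : ℕ => e (s + j)

lemma arc_succ (s : ZMod g) (m : ℕ) : arc e s (m + 1) = insert (e (s + m)) (arc e s m) := by
  rw [arc, range_add_one, image_insert, arc]

lemma arc_eq_image_univ [NeZero g] (s : ZMod g) : arc e s g = univ.image e := by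
  ext x
  simp only [arc, mem_image, mem_range, mem_univ, true_and]
  constructor
  · rintro ⟨j, -, rfl⟩
    exact ⟨_, rfl⟩
  · rintro ⟨i, rfl⟩
    exact ⟨(i - s).val, ZMod.val_lt _, by rw [ZMod.natCast_zmod_val, add_sub_cancel]⟩

lemma indepCount_arc_le (he : ∀ i, G.Adj (e i) (e (i + 1))) (s : ZMod g) :
    ∀ m, G.indepCount (arc e s m) ≤ Nat.fib (m + 2)
  | 0 => (indepCount_le_two_pow_card _).trans (by simp [arc])
  | 1 => (indepCount_le_two_pow_card _).trans <| by
      rw [show Nat.fib (1 + 2) = 2 ^ 1 from rfl]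
      exact Nat.pow_le_pow_right two_pos ((card_image_le).trans (card_range 1).le)
  | m + 2 => by
    have hadj : G.Adj (e (s + (m + 1 : ℕ))) (e (s + m)) := by
      simpa [add_assoc] using (he (s + m)).symm
    calc G.indepCount (arc e s (m + 2))
        ≤ G.indepCount ((arc e s (m + 2)).erase (e (s + (m + 1 : ℕ))))
          + G.indepCount (arc e s (m + 2) \ {e (s + (m + 1 : ℕ)), e (s + m)}) :=
          indepCount_le_erase_add_sdiff (N := {e (s + m)}) (by simpa using hadj)
      _ ≤ G.indepCount (arc e s (m + 1)) + G.indepCount (arc e s m) := by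
          rw [arc_succ s (m + 1), arc_succ s m]
          refine add_le_add (indepCount_mono (erase_insert_subset _ _)) (indepCount_mono ?_)
          intro x
          simp only [mem_sdiff, mem_insert, mem_singleton]
          tauto
      _ ≤ Nat.fib (m + 3) + Nat.fib (m + 2) :=
          add_le_add (indepCount_arc_le he s (m + 1)) (indepCount_arc_le he s m)
      _ = Nat.fib (m + 2 + 2) := by rw [Nat.fib_add_two (n := m + 2), add_comm]

lemma image_univ_eq_insert_arc [NeZero g] (t : ZMod g) :
    univ.image e = insert (e t) (arc e (t + 1) (g - 1)) := by
  obtain ⟨k, rfl⟩ : ∃ k, g = k + 1 := ⟨g - 1, (Nat.succ_pred_eq_of_ne_zero (NeZero.ne g)).symm⟩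
  have hk : ((k + 1 : ℕ) : ZMod (k + 1)) = 0 := ZMod.natCast_self _
  push_cast at hk
  rw [← arc_eq_image_univ (t + 1), Nat.add_sub_cancel, arc_succ,
    show t + 1 + (k : ZMod (k + 1)) = t by linear_combination hk]

lemma image_univ_eq_insert_insert_insert_arc [NeZero g] (hg : 3 ≤ g) :
    univ.image e = insert (e 1) (insert (e 0) (insert (e (-1)) (arc e 2 (g - 3)))) := by
  obtain ⟨k, rfl⟩ : ∃ k, g = k + 3 := ⟨g - 3, by omega⟩
  have hk : ((k + 3 : ℕ) : ZMod (k + 3)) = 0 := ZMod.natCast_self _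
  push_cast at hk
  rw [← arc_eq_image_univ 2, Nat.add_sub_cancel, arc_succ, arc_succ, arc_succ]
  push_cast
  rw [show (2 : ZMod (k + 3)) + (k + 2) = 1 by linear_combination hk,
    show (2 : ZMod (k + 3)) + (k + 1) = 0 by linear_combination hk,
    show (2 : ZMod (k + 3)) + k = -1 by linear_combination hk]

lemma indepCount_image_univ_erase_le [NeZero g] (he : ∀ i, G.Adj (e i) (e (i + 1)))
    (t : ZMod g) : G.indepCount ((univ.image e).erase (e t)) ≤ Nat.fib (g + 1) := by
  rw [image_univ_eq_insert_arc t]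
  refine (indepCount_mono (erase_insert_subset _ _)).trans ((indepCount_arc_le he _ _).trans ?_)
  rw [show g - 1 + 2 = g + 1 by have := NeZero.ne g; omega]

lemma indepCount_image_univ_le [NeZero g] (he : ∀ i, G.Adj (e i) (e (i + 1))) (hg : 3 ≤ g) :
    G.indepCount (univ.image e) ≤ Nat.fib (g + 1) + Nat.fib (g - 1) := by
  have hN : ∀ x ∈ ({e 1, e (-1)} : Finset V), G.Adj (e 0) x := by
    simpa using ⟨by simpa using he 0, by simpa using (he (-1)).symm⟩
  calc G.indepCount (univ.image e)
      ≤ G.indepCount ((univ.image e).erase (e 0))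
        + G.indepCount (univ.image e \ insert (e 0) {e 1, e (-1)}) :=
        indepCount_le_erase_add_sdiff hN
    _ ≤ Nat.fib (g + 1) + G.indepCount (arc e 2 (g - 3)) := by
        refine add_le_add (indepCount_image_univ_erase_le he 0) (indepCount_mono ?_)
        rw [image_univ_eq_insert_insert_insert_arc hg]
        intro x
        simp only [mem_sdiff, mem_insert, mem_singleton]
        tauto
    _ ≤ Nat.fib (g + 1) + Nat.fib (g - 1) := by
        gcongr
        simpa only [show g - 3 + 2 = g - 1 by omega] using indepCount_arc_le he 2 (g - 3)

lemma indepCount_insert_le [NeZero g] (he : ∀ i, G.Adj (e i) (e (i + 1))) (hg : 3 ≤ g)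
    {W : Finset V} {u w : V} (hu : u ∉ W) (hw : w ∈ W)
    (huw : G.Adj u w) :
    G.indepCount (insert u W) ≤ G.indepCount W + Nat.fib (g + 1) * 2 ^ #(W \ univ.image e) := by
  set C := univ.image e
  have hsplit : G.indepCount (insert u W) ≤ G.indepCount W + G.indepCount (W.erase w) := by
    refine (indepCount_le_erase_add_sdiff (N := {w}) (by simpa using huw)).trans ?_
    rw [erase_insert hu]
    refine add_le_add_right (indepCount_mono fun x => ?_) _
    simp only [mem_sdiff, mem_insert, mem_singleton, mem_erase]
    tauto
  suffices G.indepCount (W.erase w) ≤ Nat.fib (g + 1) * 2 ^ #(W \ C) by omega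
  refine (indepCount_le_inter_mul_two_pow (W.erase w) C).trans ?_
  by_cases hwC : w ∈ C
  · obtain ⟨t, -, rfl⟩ := mem_image.1 hwC
    gcongr ?_ * 2 ^ ?_
    · refine (indepCount_mono fun x hx => ?_).trans (indepCount_image_univ_erase_le he t)
      obtain ⟨hx, hxC⟩ := mem_inter.1 hx
      exact mem_erase.2 ⟨(mem_erase.1 hx).1, hxC⟩
    · exact one_le_two
    · exact card_le_card (sdiff_subset_sdiff (erase_subset _ _) subset_rfl)
  · have hcard : #(W.erase w \ C) + 1 = #(W \ C) := by
      rw [erase_sdiff_comm, card_erase_add_one (mem_sdiff.2 ⟨hw, hwC⟩)]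
    calc G.indepCount (W.erase w ∩ C) * 2 ^ #(W.erase w \ C)
        ≤ (Nat.fib (g + 1) + Nat.fib (g - 1)) * 2 ^ #(W.erase w \ C) := by
          gcongr
          exact (indepCount_mono inter_subset_right).trans (indepCount_image_univ_le he hg)
      _ ≤ (Nat.fib (g + 1) + Nat.fib (g + 1)) * 2 ^ #(W.erase w \ C) := by
          gcongr
          omega
      _ = Nat.fib (g + 1) * 2 ^ #(W \ C) := by
          rw [← hcard, pow_succ]
          ring

end Cycle

lemma exists_cycle_of_girth_eq {g : ℕ} (h : G.girth = g) (hg : g ≠ 0) :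
    ∃ e : ZMod g → V, Function.Injective e ∧ ∀ i, G.Adj (e i) (e (i + 1)) := by
  obtain ⟨a, w, hw, hlen⟩ := exists_girth_eq_length.2 fun hac => hg (h ▸ girth_eq_zero.2 hac)
  rw [h] at hlen
  subst hlen
  have : NeZero w.length := ⟨hg⟩
  refine ⟨fun i => w.getVert i.val, fun i j hij => ZMod.val_injective _ ?_, fun i => ?_⟩
  · exact hw.getVert_injOn' (by have := i.val_lt; simp only [Set.mem_ofPred_eq]; omega)
      (by have := j.val_lt; simp only [Set.mem_ofPred_eq]; omega) hij
  · have hsucc : w.getVert (i + 1).val = w.getVert (i.val + 1) := by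
      rw [ZMod.val_add, ZMod.val_one_eq_one_mod, Nat.add_mod_mod]
      rcases (show i.val + 1 ≤ w.length from i.val_lt).lt_or_eq with hlt | heq
      · rw [Nat.mod_eq_of_lt hlt]
      · rw [heq, Nat.mod_self, Walk.getVert_zero, Walk.getVert_length]
    change G.Adj (w.getVert i.val) (w.getVert (i + 1).val)
    rw [hsucc]
    exact w.adj_getVert_succ i.val_lt

end SimpleGraph

theorem stmt8_general {V : Type*} [Fintype V] (G : SimpleGraph V) (n g : ℕ)
    (hconn : G.Connected) (hn : Fintype.card V = n)
    (hgirth : G.girth = g) (hg : 4 ≤ g) :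
    numIndepSets G ≤ 2 ^ (n - g) * Nat.fib (g + 1) + Nat.fib (g - 1) := by
  have : NeZero g := ⟨by omega⟩
  obtain ⟨e, he_inj, he⟩ := exists_cycle_of_girth_eq hgirth (NeZero.ne g)
  have hcompl : #(univ.image e)ᶜ = n - g := by
    rw [card_compl, card_image_of_injective _ he_inj, card_univ, ZMod.card, hn]
  have hgrow := indepCount_univ_add_le hconn (univ_nonempty.image e) (Nat.fib (g + 1))
    fun _ _ _ hu _ hw huw => indepCount_insert_le he (by omega) hu hw huw
  have hcycle := indepCount_image_univ_le he (by omega : 3 ≤ g)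
  rw [hcompl] at hgrow
  rw [numIndepSets_eq_indepCount_univ, mul_comm]
  omega

theorem stmt8 {V : Type*} [Fintype V] (G : SimpleGraph V) (n g : ℕ)
    (hconn : G.Connected) (hbip : G.Colorable 2) (hn : Fintype.card V = n)
    (hgirth : G.girth = g) (hg : 4 ≤ g) :
    numIndepSets G ≤ 2 ^ (n - g) * Nat.fib (g + 1) + Nat.fib (g - 1) :=
  stmt8_general G n g hconn hn hgirth hg
end

section
/- If G is a tree of order 2n that contains a perfect matching, then i(G) ≤ 2·3^{n-1} + 2^{n-1}. -/
/-!
Pair the vertices along the perfect matching and sort the `n` pairs by their distance from a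
root, so that every pair but the first has an edge to an earlier pair. An independent set puts
each pair in one of three states (no end, or one of the two ends chosen), and the edge from a
pair to its parent pair forbids one combination of their states. Let `N k` count the admissible
state vectors on the first `k` pairs. Any fixed state of any one pair extends in at least two
ways across each further pair, so at least `2 ^ (k - 1)` of these vectors put the parent of pair
`k + 1` in its forbidden state. Hence `N (k + 1) ≤ 3 * N k - 2 ^ (k - 1)`, and this recursion
solves to `N n ≤ 2 * 3 ^ (n - 1) + 2 ^ (n - 1)`.
-/

open SimpleGraph

open Finset

lemma card_mul_le_card_filter_ne {ι β : Type*} [Fintype β] [DecidableEq β] {s : Finset ι}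
    (f : ι → β) {m : ℕ} (h : ∀ b, m ≤ #{x ∈ s | f x = b}) (b₀ : β) :
    (Fintype.card β - 1) * m ≤ #{x ∈ s | f x ≠ b₀} := by
  rw [card_eq_sum_card_fiberwise (f := f) (t := univ.erase b₀)
    fun x hx => by simpa using (mem_filter.1 hx).2]
  calc (Fintype.card β - 1) * m = #(univ.erase b₀) • m := by
        rw [card_erase_of_mem (mem_univ _), card_univ, smul_eq_mul]
    _ ≤ ∑ b ∈ univ.erase b₀, #{x ∈ s | f x = b} := card_nsmul_le_sum _ _ _ fun b _ => h b
    _ = _ := sum_congr rfl fun b hb => by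
        rw [filter_filter]
        exact congrArg card (filter_congr fun x _ =>
          (and_iff_right_of_imp fun hx => hx ▸ ne_of_mem_erase hb).symm)

lemma card_filter_not_and_add_ite {α : Type*} [Fintype α] [DecidableEq α] (a : α) (Q : Prop)
    [Decidable Q] : #{x | ¬(x = a ∧ Q)} + (if Q then 1 else 0) = Fintype.card α := by
  by_cases hQ : Q
  · have : Nonempty α := ⟨a⟩
    simp [hQ, filter_ne', card_erase_of_mem, Nat.sub_add_cancel Fintype.card_pos]
  · simp [hQ]

namespace PairTree

variable {α : Type*} (p : ℕ → ℕ) (c d : ℕ → α)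

-- Independence in a tree of matched pairs: pair `k > 0` is joined to its parent pair `p k` by an
-- edge whose ends are selected by the states `c k` and `d k`.
def TreeValid {n : ℕ} (σ : Fin n → α) : Prop :=
  ∀ i j : Fin n, 0 < (i : ℕ) → (j : ℕ) = p i → ¬(σ i = c i ∧ σ j = d i)

instance [DecidableEq α] {n : ℕ} : DecidablePred (TreeValid (n := n) p c d) := fun _ => by
  unfold TreeValid; infer_instance

variable {p}

def lastParent (hp : ∀ k, 0 < k → p k < k) (n : ℕ) : Fin (n + 1) :=
  ⟨p (n + 1), hp _ (by omega)⟩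

lemma treeValid_snoc (hp : ∀ k, 0 < k → p k < k) {n : ℕ} (σ : Fin (n + 1) → α) (x : α) :
    TreeValid p c d (Fin.snoc σ x : Fin (n + 2) → α) ↔
      TreeValid p c d σ ∧ ¬(x = c (n + 1) ∧ σ (lastParent hp n) = d (n + 1)) := by
  refine ⟨fun h => ⟨fun i j hi hj => ?_, fun hx => ?_⟩, fun ⟨h, hx⟩ i j hi hj => ?_⟩
  · simpa using h i.castSucc j.castSucc hi hj
  · refine h (Fin.last _) (lastParent hp n).castSucc (by simp) rfl ?_
    simpa using hx
  · induction j using Fin.lastCases with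
    | last => have := hp _ hi; have := i.is_le; simp at hj; omega
    | cast j =>
      induction i using Fin.lastCases with
      | last =>
        obtain rfl : j = lastParent hp n := Fin.ext (by simpa [lastParent] using hj)
        simpa using hx
      | cast i => simpa using h i j hi hj

lemma card_treeValid_filter_snoc [Fintype α] [DecidableEq α] (hp : ∀ k, 0 < k → p k < k)
    {n : ℕ} (P : (Fin (n + 2) → α) → Prop) [DecidablePred P] :
    #{σ | TreeValid p c d σ ∧ P σ} =
      ∑ σ with TreeValid p c d σ,
        #{x | ¬(x = c (n + 1) ∧ σ (lastParent hp n) = d (n + 1)) ∧ P (Fin.snoc σ x)} := by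
  simp only [card_filter, sum_filter]
  rw [← (Fin.snocEquiv fun _ => α).sum_comp, Fintype.sum_prod_type, sum_comm]
  refine sum_congr rfl fun σ _ => ?_
  by_cases hσ : TreeValid p c d σ <;> simp [Fin.snocEquiv, treeValid_snoc c d hp, hσ]

lemma card_treeValid_snoc_add [Fintype α] [DecidableEq α] (hp : ∀ k, 0 < k → p k < k)
    (n : ℕ) :
    #{σ : Fin (n + 2) → α | TreeValid p c d σ} +
        #{σ : Fin (n + 1) → α | TreeValid p c d σ ∧ σ (lastParent hp n) = d (n + 1)} =
      Fintype.card α * #{σ : Fin (n + 1) → α | TreeValid p c d σ} := by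
  have h := card_treeValid_filter_snoc c d hp (n := n) (fun _ => True)
  simp only [and_true] at h
  rw [h, ← filter_filter, card_filter _ (filter _ _), ← sum_add_distrib, card_eq_sum_ones,
    mul_sum, mul_one]
  exact sum_congr rfl fun σ _ => card_filter_not_and_add_ite _ _

lemma pow_le_card_treeValid_apply_eq [Fintype α] [DecidableEq α] (hp : ∀ k, 0 < k → p k < k)
    {q : ℕ} (hq : Fintype.card α = q + 1) (n : ℕ) (j : Fin (n + 1)) (v : α) :
    q ^ n ≤ #{σ : Fin (n + 1) → α | TreeValid p c d σ ∧ σ j = v} := by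
  induction n generalizing v with
  | zero =>
    refine card_pos.2 ⟨fun _ => v, ?_⟩
    simp [TreeValid, Fin.val_eq_zero]
  | succ n ih =>
    have hfiber (σ : Fin (n + 1) → α) :
        q ≤ #{x | ¬(x = c (n + 1) ∧ σ (lastParent hp n) = d (n + 1))} := by
      have := card_filter_not_and_add_ite (c (n + 1)) (σ (lastParent hp n) = d (n + 1))
      split_ifs at this <;> omega
    rw [card_treeValid_filter_snoc c d hp]
    induction j using Fin.lastCases with
    | last =>
      calc q ^ (n + 1) = (Fintype.card α - 1) * q ^ n := by rw [hq, pow_succ']; rfl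
        _ ≤ #{σ ∈ {σ | TreeValid p c d σ} | σ (lastParent hp n) ≠ d (n + 1)} :=
            card_mul_le_card_filter_ne _ (fun w => by rw [filter_filter]; exact ih _ w) _
        _ ≤ _ := by
            rw [card_eq_sum_ones, sum_filter]
            refine sum_le_sum fun σ _ => ?_
            split_ifs with h
            · exact card_pos.2 ⟨v, by simp [h]⟩
            · exact Nat.zero_le _
    | cast j =>
      calc q ^ (n + 1) ≤ #{σ : Fin (n + 1) → α | TreeValid p c d σ ∧ σ j = v} * q := by
            rw [pow_succ]; gcongr; exact ih j v
        _ = ∑ σ with TreeValid p c d σ ∧ σ j = v, q := by rw [sum_const, smul_eq_mul]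
        _ ≤ ∑ σ with TreeValid p c d σ ∧ σ j = v,
              #{x | ¬(x = c (n + 1) ∧ σ (lastParent hp n) = d (n + 1))} :=
            sum_le_sum fun σ _ => hfiber σ
        _ = _ := by
            rw [← filter_filter, sum_filter]
            refine sum_congr rfl fun σ _ => ?_
            by_cases h : σ j = v <;> simp [h]

lemma card_treeValid_le [Fintype α] [DecidableEq α] (hp : ∀ k, 0 < k → p k < k)
    {q : ℕ} (hq : Fintype.card α = q + 1) (n : ℕ) :
    #{σ : Fin (n + 1) → α | TreeValid p c d σ} ≤ q * (q + 1) ^ n + q ^ n := by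
  induction n with
  | zero => simp [TreeValid, Fin.val_eq_zero, hq]
  | succ n ih =>
    have hsplit := card_treeValid_snoc_add c d hp n
    have hlow := pow_le_card_treeValid_apply_eq c d hp hq n (lastParent hp n) (d (n + 1))
    have hup := Nat.mul_le_mul_left (q + 1) ih
    rw [hq] at hsplit
    rw [pow_succ, pow_succ]
    nlinarith

theorem card_conflictFree_le [Fintype α] [DecidableEq α] {q : ℕ}
    (hq : Fintype.card α = q + 1) {n : ℕ} (Conf : Fin n → Fin n → α → α → Prop)
    (hConf : ∀ i : Fin n, 0 < (i : ℕ) → ∃ j < i, ∃ a b, Conf i j a b) :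
    Nat.card {σ : Fin n → α // ∀ i j, ¬Conf i j (σ i) (σ j)} ≤
      q * (q + 1) ^ (n - 1) + q ^ (n - 1) := by
  have : Nonempty α := Fintype.card_pos_iff.1 (by omega)
  -- parents and forbidden states indexed by `ℕ`, so that they restrict to every initial segment
  have hdata (k : ℕ) : ∃ (l : ℕ) (a b : α), 0 < k →
      ∃ hl : l < k, ∀ hk : k < n, Conf ⟨k, hk⟩ ⟨l, hl.trans hk⟩ a b := by
    by_cases hk : 0 < k ∧ k < n
    · obtain ⟨j, hj, a, b, h⟩ := hConf ⟨k, hk.2⟩ hk.1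
      exact ⟨j, a, b, fun _ => ⟨hj, fun _ => h⟩⟩
    · exact ⟨0, Classical.arbitrary α, Classical.arbitrary α, fun hk0 => ⟨hk0, by omega⟩⟩
  choose p c d hpcd using hdata
  have hp (k : ℕ) (hk : 0 < k) : p k < k := (hpcd k hk).1
  calc Nat.card {σ : Fin n → α // ∀ i j, ¬Conf i j (σ i) (σ j)}
      ≤ Nat.card {σ : Fin n → α // TreeValid p c d σ} := by
        refine Nat.card_le_card_of_injective (fun σ => ⟨σ.1, fun i j hi hj hσ => ?_⟩)
          fun σ τ h => Subtype.ext (congrArg Subtype.val h :)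
        obtain ⟨_, hconf⟩ := hpcd i hi
        obtain ⟨j, hjn⟩ := j
        subst hj
        exact σ.2 i _ (hσ.1 ▸ hσ.2 ▸ hconf i.2)
    _ = #{σ : Fin n → α | TreeValid p c d σ} := by
        rw [Nat.card_eq_fintype_card, Fintype.card_subtype]
    _ ≤ q * (q + 1) ^ (n - 1) + q ^ (n - 1) := by
        rcases n with _ | m
        · exact (card_le_univ _).trans (by simp)
        · exact card_treeValid_le c d hp hq m

end PairTree

namespace SimpleGraph.Subgraph

variable {V : Type*} {G : SimpleGraph V} {M : G.Subgraph}

lemma IsPerfectMatching.exists_equiv_fin_prod_bool [Fintype V] (hM : M.IsPerfectMatching)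
    {n : ℕ} (hn : Fintype.card V = 2 * n) :
    ∃ f : Fin n × Bool ≃ V, ∀ i, M.Adj (f (i, false)) (f (i, true)) := by
  choose m hm hmu using isPerfectMatching_iff.1 hM
  have hmm (v : V) : m (m v) = v := (hmu _ _ (hm v).symm).symm
  let _ : LinearOrder V := LinearOrder.lift' _ (Fintype.equivFin V).injective
  have hlt (v : V) : ¬v < m v → m v < m (m v) := by
    rw [hmm, not_lt]; exact fun h => h.lt_of_ne (hm v).ne.symm
  let g : {v : V // v < m v} × Bool ≃ V :=
    { toFun := fun x => if x.2 then m x.1 else x.1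
      invFun := fun v => if h : v < m v then (⟨v, h⟩, false) else (⟨m v, hlt v h⟩, true)
      left_inv := by
        rintro ⟨⟨v, hv⟩, _ | _⟩
        · simp [hv]
        · simp [hmm, hv.not_gt]
      right_inv := fun v => by by_cases h : v < m v <;> simp [h, hmm] }
  have hcard : Fintype.card {v : V // v < m v} = n := by
    have := Fintype.card_congr g
    simp only [Fintype.card_prod, Fintype.card_bool] at this
    omega
  exact ⟨((Fintype.equivFinOfCardEq hcard).symm.prodCongr (Equiv.refl _)).trans g,
    fun i => hm _⟩

end SimpleGraph.Subgraph

namespace SimpleGraph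

variable {V : Type*} {G : SimpleGraph V}

lemma Connected.exists_adj_dist_lt (hG : G.Connected) {r x : V} (hx : G.dist r x ≠ 0) :
    ∃ y, G.Adj x y ∧ G.dist r y < G.dist r x := by
  obtain ⟨w, hw⟩ := hG.exists_walk_length_eq_dist x r
  cases w with
  | nil => simp at hx
  | cons hadj w =>
    refine ⟨_, hadj, ?_⟩
    have := dist_le w
    rw [Walk.length_cons] at hw
    rw [dist_comm, dist_comm (u := r)]
    omega

lemma Connected.exists_perm_forall_exists_adj (hG : G.Connected) {n : ℕ}
    (f : Fin n × Bool ≃ V) :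
    ∃ π : Equiv.Perm (Fin n), ∀ i : Fin n, 0 < (i : ℕ) →
      ∃ j < i, ∃ b b', G.Adj (f (π i, b)) (f (π j, b')) := by
  obtain ⟨r⟩ := hG.nonempty
  set rk : Fin n → ℕ := fun k => min (G.dist r (f (k, false))) (G.dist r (f (k, true)))
  have rk_le (k : Fin n) (b : Bool) : rk k ≤ G.dist r (f (k, b)) := by
    cases b
    exacts [min_le_left _ _, min_le_right _ _]
  have exists_dist_eq (k : Fin n) : ∃ b, G.dist r (f (k, b)) = rk k := by
    rcases min_choice (G.dist r (f (k, false))) (G.dist r (f (k, true))) with h | h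
    exacts [⟨false, h.symm⟩, ⟨true, h.symm⟩]
  have eq_of_rk_eq_zero (k : Fin n) (hk : rk k = 0) : k = (f.symm r).1 := by
    obtain ⟨b, hb⟩ := exists_dist_eq k
    rw [hk, hG.dist_eq_zero_iff] at hb
    simp [hb]
  refine ⟨Tuple.sort rk, fun i hi => ?_⟩
  have hmono := Tuple.monotone_sort rk
  set π := Tuple.sort rk
  -- only the pair containing `r` has rank `0`, and it comes first
  have hrk : rk (π i) ≠ 0 := fun h0 => by
    have h01 : rk (π ⟨0, by omega⟩) ≤ rk (π i) :=
      hmono (Fin.le_iff_val_le_val.2 (Nat.zero_le _))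
    have h00 : rk (π ⟨0, by omega⟩) = 0 := by omega
    have := π.injective ((eq_of_rk_eq_zero _ h0).trans (eq_of_rk_eq_zero _ h00).symm)
    simp [this] at hi
  obtain ⟨b, hb⟩ := exists_dist_eq (π i)
  obtain ⟨y, hadj, hy⟩ := hG.exists_adj_dist_lt (hb ▸ hrk)
  refine ⟨π.symm (f.symm y).1, ?_, b, (f.symm y).2, by simpa using hadj⟩
  by_contra! hle
  have h1 : rk (π i) ≤ rk (π (π.symm (f.symm y).1)) := hmono hle
  have h2 := rk_le (f.symm y).1 (f.symm y).2
  rw [π.apply_symm_apply] at h1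
  rw [Prod.mk.eta, f.apply_symm_apply] at h2
  omega

def PairConflict {n : ℕ} (G : SimpleGraph V) (f : Fin n × Bool → V) (i j : Fin n)
    (a b : Option Bool) : Prop :=
  ∃ β γ, a = some β ∧ b = some γ ∧ G.Adj (f (i, β)) (f (j, γ))

open Classical in
noncomputable def pairState {n : ℕ} (f : Fin n × Bool → V) (s : Set V) (i : Fin n) :
    Option Bool :=
  if f (i, true) ∈ s then some true else if f (i, false) ∈ s then some false else none

lemma pairState_eq_some_iff {n : ℕ} {f : Fin n × Bool → V}
    (hf : ∀ i, G.Adj (f (i, false)) (f (i, true))) {s : Set V}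
    (hs : ∀ u ∈ s, ∀ v ∈ s, ¬G.Adj u v) (i : Fin n) (β : Bool) :
    pairState f s i = some β ↔ f (i, β) ∈ s := by
  have hpair : f (i, false) ∈ s → f (i, true) ∉ s := fun h h' => hs _ h _ h' (hf i)
  cases β <;> by_cases h : f (i, true) ∈ s <;> simp_all [pairState]

lemma numIndepSets_le_card_not_pairConflict {n : ℕ} {f : Fin n × Bool ≃ V}
    (hf : ∀ i, G.Adj (f (i, false)) (f (i, true))) :
    numIndepSets G ≤
      Nat.card {σ : Fin n → Option Bool // ∀ i j, ¬G.PairConflict f i j (σ i) (σ j)} := by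
  refine Nat.card_le_card_of_injective
    (fun s => ⟨pairState f s, fun i j ⟨β, γ, hβ, hγ, hadj⟩ => ?_⟩) fun s t hst => ?_
  · exact s.2 _ ((pairState_eq_some_iff hf s.2 i β).1 hβ) _
      ((pairState_eq_some_iff hf s.2 j γ).1 hγ) hadj
  · have hst : pairState f s.1 = pairState f t.1 := congrArg Subtype.val hst
    ext v
    rw [← f.apply_symm_apply v, ← pairState_eq_some_iff hf s.2,
      ← pairState_eq_some_iff hf t.2, hst]

end SimpleGraph

theorem stmt9 {V : Type*} [Fintype V] (G : SimpleGraph V) (hT : G.IsTree) (n : ℕ)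
    (hn : Fintype.card V = 2 * n)
    (hpm : ∃ M : G.Subgraph, M.IsPerfectMatching) :
    numIndepSets G ≤ 2 * 3 ^ (n - 1) + 2 ^ (n - 1) := by
  obtain ⟨M, hM⟩ := hpm
  obtain ⟨f, hf⟩ := hM.exists_equiv_fin_prod_bool hn
  obtain ⟨π, hπ⟩ := hT.connected.exists_perm_forall_exists_adj f
  let g : Fin n × Bool ≃ V := (π.prodCongr (Equiv.refl Bool)).trans f
  calc numIndepSets G
      ≤ Nat.card {σ : Fin n → Option Bool // ∀ i j, ¬G.PairConflict g i j (σ i) (σ j)} :=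
        numIndepSets_le_card_not_pairConflict fun i => M.adj_sub (hf (π i))
    _ ≤ 2 * (2 + 1) ^ (n - 1) + 2 ^ (n - 1) :=
        PairTree.card_conflictFree_le rfl _ fun i hi => by
          obtain ⟨j, hji, b, b', hadj⟩ := hπ i hi
          exact ⟨j, hji, some b, some b', b, b', rfl, rfl, hadj⟩
end

section
/- Let G be the balanced caterpillar obtained from the path P_n = x_1 x_2 ⋯ x_n (n ≥ 2) by appending exactly k ≥ 1 pendant leaves to each vertex x_i. Then i(G) = Σ_{j=0}^{⌈n/2⌉} C(n+1−j, j) · 2^{(n−j)k}. -/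
open SimpleGraph

/-- The balanced caterpillar: the path on `n` spine vertices, where each spine vertex `a`
gets `k` pendant leaves `(a, j)`. -/
def balancedCaterpillar (n k : ℕ) : SimpleGraph (Fin n ⊕ Fin n × Fin k) :=
  SimpleGraph.fromRel (fun u v =>
    (∃ a b, u = Sum.inl a ∧ v = Sum.inl b ∧ (pathGraph n).Adj a b) ∨
    (∃ a j, u = Sum.inl a ∧ v = Sum.inr (a, j)))

/-! An independent set of the caterpillar is an independent set `A` of the spine together with
an arbitrary set of leaves hanging off spine vertices outside `A`, so `i(G) = ∑_A 2 ^ ((n - |A|) k)`.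
Grouping by `j = |A|`, it remains to count the `j`-subsets of `{0, …, n - 1}` with no two
consecutive elements; splitting on whether `n - 1` is used gives Pascal's recursion for
`C(n + 1 - j, j)`. -/

open Finset

lemma numIndepSets_eq_card_filter {V : Type*} [Fintype V] [DecidableEq V] (G : SimpleGraph V)
    [DecidableRel G.Adj] : numIndepSets G = #{s : Finset V | G.IsIndepSet s} := by
  rw [numIndepSets, ← Fintype.card_subtype, ← Nat.card_eq_fintype_card]
  refine Nat.card_congr (Equiv.subtypeEquiv Fintype.finsetEquivSet fun s => ?_).symm
  simp only [Fintype.finsetEquivSet, Equiv.coe_fn_mk, isIndepSet_iff, Set.Pairwise, mem_coe]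
  exact ⟨fun h u hu v hv hadj => h hu hv (G.ne_of_adj hadj) hadj, fun h u hu v hv _ => h u hu v hv⟩

namespace SimpleGraph

variable {V : Type*} {H : SimpleGraph V}

def withPendantLeaves (H : SimpleGraph V) (ι : Type*) : SimpleGraph (V ⊕ V × ι) :=
  fromRel fun u v =>
    (∃ a b, u = .inl a ∧ v = .inl b ∧ H.Adj a b) ∨ (∃ a i, u = .inl a ∧ v = .inr (a, i))

lemma balancedCaterpillar_eq_withPendantLeaves (n k : ℕ) :
    balancedCaterpillar n k = (pathGraph n).withPendantLeaves (Fin k) :=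
  rfl

section PendantLeaves

variable {ι : Type*}

@[simp] lemma withPendantLeaves_adj_inl_inl {a b : V} :
    (H.withPendantLeaves ι).Adj (.inl a) (.inl b) ↔ H.Adj a b := by
  simpa [withPendantLeaves, H.adj_comm b a] using H.ne_of_adj

@[simp] lemma withPendantLeaves_adj_inl_inr {a : V} {p : V × ι} :
    (H.withPendantLeaves ι).Adj (.inl a) (.inr p) ↔ p.1 = a := by
  obtain ⟨b, i⟩ := p
  simp [withPendantLeaves, eq_comm]

@[simp] lemma withPendantLeaves_adj_inr_inl {a : V} {p : V × ι} :
    (H.withPendantLeaves ι).Adj (.inr p) (.inl a) ↔ p.1 = a := by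
  rw [adj_comm, withPendantLeaves_adj_inl_inr]

@[simp] lemma not_withPendantLeaves_adj_inr_inr {p q : V × ι} :
    ¬ (H.withPendantLeaves ι).Adj (.inr p) (.inr q) := by
  simp [withPendantLeaves]

lemma isIndepSet_withPendantLeaves_disjSum {A : Finset V} {B : Finset (V × ι)} :
    (H.withPendantLeaves ι).IsIndepSet ↑(A.disjSum B) ↔ H.IsIndepSet ↑A ∧ ∀ p ∈ B, p.1 ∉ A := by
  simp only [isIndepSet_iff, Set.Pairwise, mem_coe, Sum.forall, inl_mem_disjSum, inr_mem_disjSum,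
    ne_eq, Sum.inl.injEq, reduceCtorEq, not_false_eq_true, Sum.inr.injEq,
    withPendantLeaves_adj_inl_inl, withPendantLeaves_adj_inl_inr, withPendantLeaves_adj_inr_inl,
    not_withPendantLeaves_adj_inr_inr]
  grind

theorem numIndepSets_withPendantLeaves [Fintype V] [DecidableEq V] [DecidableRel H.Adj]
    [Fintype ι] :
    numIndepSets (H.withPendantLeaves ι) =
      ∑ A ∈ ({A | H.IsIndepSet (A : Set V)} : Finset (Finset V)),
        2 ^ ((Fintype.card V - #A) * Fintype.card ι) := by
  classical
  have hdecomp :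
      ({S | (H.withPendantLeaves ι).IsIndepSet (S : Set _)} : Finset (Finset (V ⊕ V × ι))) =
        (({A | H.IsIndepSet (A : Set V)} : Finset (Finset V)).sigma
          fun A => (Aᶜ ×ˢ univ).powerset).map ⟨fun x => x.1.disjSum x.2, by
            rintro ⟨A, B⟩ ⟨A', B'⟩ h
            obtain ⟨rfl, rfl⟩ : A = A' ∧ B = B' :=
              ⟨by simpa using congrArg toLeft h, by simpa using congrArg toRight h⟩
            rfl⟩ := by
    ext S
    simp only [mem_filter, mem_univ, true_and, mem_map, mem_sigma, mem_powerset]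
    constructor
    · intro hS
      rw [← toLeft_disjSum_toRight (u := S), isIndepSet_withPendantLeaves_disjSum] at hS
      exact ⟨⟨S.toLeft, S.toRight⟩, ⟨hS.1, fun p hp => by simpa using hS.2 p hp⟩,
        toLeft_disjSum_toRight⟩
    · rintro ⟨⟨A, B⟩, ⟨hA, hB⟩, rfl⟩
      exact isIndepSet_withPendantLeaves_disjSum.2 ⟨hA, fun p hp => by simpa using hB hp⟩
  rw [numIndepSets_eq_card_filter, hdecomp, card_map, card_sigma]
  refine sum_congr rfl fun A _ => ?_
  rw [card_powerset, card_product, card_compl, card_univ]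

end PendantLeaves

theorem sum_indepSets_eq_sum_card_indepSetFinset [Fintype V] [DecidableEq V] [DecidableRel H.Adj]
    {M : Type*} [AddCommMonoid M] (f : ℕ → M) :
    ∑ A ∈ ({A | H.IsIndepSet (A : Set V)} : Finset (Finset V)), f #A =
      ∑ j ∈ range (Fintype.card V + 1), #(H.indepSetFinset j) • f j := by
  rw [← sum_fiberwise_of_maps_to (g := card) (t := range (Fintype.card V + 1))
    fun A _ => mem_range.2 (Nat.lt_succ_of_le (card_le_univ A))]
  refine sum_congr rfl fun j _ => ?_
  have hfiber : ({A ∈ ({A | H.IsIndepSet (A : Set V)} : Finset (Finset V)) | #A = j}) =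
      H.indepSetFinset j := by
    ext A
    simp [isNIndepSet_iff]
  rw [hfiber, ← sum_const]
  exact sum_congr rfl fun A hA => by rw [(mem_indepSetFinset_iff.1 hA).card_eq]

end SimpleGraph

def noConsecutiveSubsets (n j : ℕ) : Finset (Finset ℕ) :=
  ((range n).powersetCard j).filter fun A => ∀ a ∈ A, a + 1 ∉ A

lemma mem_noConsecutiveSubsets {n j : ℕ} {A : Finset ℕ} :
    A ∈ noConsecutiveSubsets n j ↔ (∀ a ∈ A, a < n) ∧ #A = j ∧ ∀ a ∈ A, a + 1 ∉ A := by
  simp [noConsecutiveSubsets, mem_powersetCard, subset_iff, and_assoc]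

lemma card_noConsecutiveSubsets_add_two (n j : ℕ) :
    #(noConsecutiveSubsets (n + 2) (j + 1)) =
      #(noConsecutiveSubsets (n + 1) (j + 1)) + #(noConsecutiveSubsets n j) := by
  rw [← card_filter_add_card_filter_not (fun A => n + 1 ∉ A)]
  congr 1
  · congr 1
    ext A
    simp only [mem_filter, mem_noConsecutiveSubsets]
    grind
  · refine card_nbij' (fun A => A.erase (n + 1)) (insert (n + 1)) ?_ ?_ ?_ ?_
    · intro A hA
      simp only [coe_filter, Set.mem_ofPred_eq, mem_coe, mem_noConsecutiveSubsets, not_not] at hA ⊢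
      obtain ⟨⟨hlt, hcard, hsep⟩, hn⟩ := hA
      refine ⟨fun a ha => ?_, by rw [card_erase_of_mem hn, hcard]; rfl,
        fun a ha h => hsep a (mem_of_mem_erase ha) (mem_of_mem_erase h)⟩
      grind
    · intro A hA
      simp only [coe_filter, Set.mem_ofPred_eq, mem_coe, mem_noConsecutiveSubsets, not_not] at hA ⊢
      obtain ⟨hlt, hcard, hsep⟩ := hA
      have hn : n + 1 ∉ A := fun h => by have := hlt _ h; omega
      refine ⟨⟨?_, by rw [card_insert_of_notMem hn, hcard], ?_⟩, mem_insert_self _ _⟩ <;> grind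
    · intro A hA
      simp only [coe_filter, Set.mem_ofPred_eq, not_not] at hA
      exact insert_erase hA.2
    · intro A hA
      simp only [mem_coe, mem_noConsecutiveSubsets] at hA
      exact erase_insert fun h => by have := hA.1 _ h; omega

-- Pascal's rule survives truncated subtraction: for `j > m` both sides vanish.
lemma choose_succ_sub_succ_eq_add (m j : ℕ) :
    (m + 1 - j).choose (j + 1) = (m - j).choose (j + 1) + (m - j).choose j := by
  rcases le_or_gt j m with h | h
  · rw [Nat.sub_add_comm h, Nat.choose_succ_succ, add_comm]
  · rw [show m + 1 - j = 0 by omega, show m - j = 0 by omega,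
      Nat.choose_zero_succ, Nat.choose_eq_zero_of_lt (pos_of_gt h)]

theorem card_noConsecutiveSubsets : ∀ n j, #(noConsecutiveSubsets n j) = (n + 1 - j).choose j
  | n, 0 => by simp [noConsecutiveSubsets, filter_singleton]
  | 0, j + 1 => by simp [noConsecutiveSubsets]
  | 1, 1 => by decide
  | 1, j + 2 => by simp [noConsecutiveSubsets]
  | n + 2, j + 1 => by
    rw [card_noConsecutiveSubsets_add_two, card_noConsecutiveSubsets (n + 1),
      card_noConsecutiveSubsets n, Nat.add_sub_add_right, Nat.add_sub_add_right,
      choose_succ_sub_succ_eq_add (n + 1)]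

namespace SimpleGraph

instance (n : ℕ) : DecidableRel (pathGraph n).Adj := fun _ _ => decidable_of_iff' _ pathGraph_adj

lemma pathGraph_isIndepSet_iff {n : ℕ} {s : Finset (Fin n)} :
    (pathGraph n).IsIndepSet (s : Set (Fin n)) ↔ ∀ a ∈ s, ∀ b ∈ s, (a : ℕ) + 1 ≠ b := by
  simp only [isIndepSet_iff, Set.Pairwise, mem_coe, pathGraph_adj]
  grind

theorem map_indepSetFinset_pathGraph (n j : ℕ) :
    ((pathGraph n).indepSetFinset j).map (mapEmbedding Fin.valEmbedding).toEmbedding =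
      noConsecutiveSubsets n j := by
  rw [noConsecutiveSubsets, ← Nat.Iio_eq_range, ← Fin.map_valEmbedding_univ, powersetCard_map,
    filter_map]
  congr 1
  ext s
  simp only [mem_indepSetFinset_iff, isNIndepSet_iff, mem_filter, mem_powersetCard_univ,
    pathGraph_isIndepSet_iff, Function.comp_apply, RelEmbedding.coe_toEmbedding, mapEmbedding_apply,
    mem_map, Fin.valEmbedding_apply, not_exists, not_and, forall_exists_index, and_imp,
    forall_apply_eq_imp_iff₂]
  grind

theorem card_indepSetFinset_pathGraph (n j : ℕ) :
    #((pathGraph n).indepSetFinset j) = (n + 1 - j).choose j := by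
  rw [← card_noConsecutiveSubsets, ← map_indepSetFinset_pathGraph, card_map]

end SimpleGraph

theorem stmt11_general (n k : ℕ) :
    numIndepSets (balancedCaterpillar n k) =
      ∑ j ∈ Finset.range ((n + 1) / 2 + 1),
        (n + 1 - j).choose j * 2 ^ ((n - j) * k) := by
  rw [balancedCaterpillar_eq_withPendantLeaves, numIndepSets_withPendantLeaves, Fintype.card_fin,
    Fintype.card_fin, sum_indepSets_eq_sum_card_indepSetFinset fun j => 2 ^ ((n - j) * k)]
  simp only [Fintype.card_fin, card_indepSetFinset_pathGraph, smul_eq_mul]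
  -- `C(n + 1 - j, j) = 0` as soon as `2 j > n + 1`
  refine (sum_subset (range_subset_range.2 (by omega)) fun j hj hj' => ?_).symm
  rw [mem_range] at hj hj'
  rw [Nat.choose_eq_zero_of_lt (by omega), zero_mul]

theorem stmt11 (n k : ℕ) (hn : 2 ≤ n) (hk : 1 ≤ k) :
    numIndepSets (balancedCaterpillar n k) =
      ∑ j ∈ Finset.range ((n + 1) / 2 + 1),
        (n + 1 - j).choose j * 2 ^ ((n - j) * k) :=
  stmt11_general n k
end

section
/- The number of 11-avoiding words of length n over the alphabet {0, 1, …, 2^k} (words in which no two consecutive letters are both equal to 1) equals Σ_{j=0}^{⌈n/2⌉} C(n+1−j, j) · 2^{(n−j)k}. -/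
/-!
Write `q = 2 ^ k` for the number of letters other than `1`. Splitting an admissible word of
length `n + 2` by its first letter: if it is not `1`, it is followed by any admissible word of
length `n + 1`; if it is `1`, the second letter is one of the `q` letters other than `1`, followed
by any admissible word of length `n`. Hence the counts satisfy `a (n + 2) = q a (n + 1) + q a n`
with `a 0 = 1`, `a 1 = q + 1`, and Pascal's rule shows that `∑ C(n + 1 - j, j) q ^ (n - j)`
satisfies the same recurrence.
-/

open Finset

section Choose

def choosePowTerm (q n j : ℕ) : ℕ := (n + 1 - j).choose j * q ^ (n - j)

def choosePowSum (q n : ℕ) : ℕ := ∑ j ∈ range ((n + 1) / 2 + 1), choosePowTerm q n j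

variable (q : ℕ)

lemma choosePowTerm_zero (n : ℕ) : choosePowTerm q n 0 = q ^ n := by
  simp [choosePowTerm]

lemma choosePowTerm_succ_succ (n j : ℕ) :
    choosePowTerm q (n + 2) (j + 1) =
      q * choosePowTerm q (n + 1) (j + 1) + q * choosePowTerm q n j := by
  unfold choosePowTerm
  rcases le_or_gt j n with hj | hj
  · rw [show n + 2 + 1 - (j + 1) = n + 1 - j + 1 by omega, Nat.choose_succ_succ',
      show n + 1 + 1 - (j + 1) = n + 1 - j by omega, show n + 1 - (j + 1) = n - j by omega,
      show n + 1 - j = n - j + 1 by omega, pow_succ]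
    ring
  · simp [Nat.choose_eq_zero_of_lt (show n + 2 - j < j + 1 by omega),
      Nat.choose_eq_zero_of_lt (show n + 1 - j < j + 1 by omega),
      Nat.choose_eq_zero_of_lt (show n + 1 - j < j by omega)]

lemma choosePowSum_eq_sum_range {n N : ℕ} (hN : (n + 1) / 2 < N) :
    choosePowSum q n = ∑ j ∈ range N, choosePowTerm q n j := by
  refine sum_subset (range_subset_range.mpr hN) fun j _ hj => ?_
  rw [mem_range, not_lt] at hj
  simp [choosePowTerm, Nat.choose_eq_zero_of_lt (show n + 1 - j < j by omega)]

lemma choosePowSum_zero : choosePowSum q 0 = 1 := by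
  simp [choosePowSum, choosePowTerm]

lemma choosePowSum_one : choosePowSum q 1 = q + 1 := by
  simp [choosePowSum, choosePowTerm, sum_range_succ]

lemma choosePowSum_succ_succ (n : ℕ) :
    choosePowSum q (n + 2) = q * choosePowSum q (n + 1) + q * choosePowSum q n := by
  rw [choosePowSum_eq_sum_range q (N := n + 3) (by omega),
    choosePowSum_eq_sum_range q (N := n + 3) (by omega),
    choosePowSum_eq_sum_range q (N := n + 2) (by omega), sum_range_succ', sum_range_succ' _ (n + 2)]
  simp only [choosePowTerm_succ_succ, sum_add_distrib, choosePowTerm_zero, mul_add, mul_sum]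
  ring

end Choose

lemma Nat.card_subtype_eq_card_and_add_card_and_not {α : Type*} [Finite α] (p q : α → Prop) :
    Nat.card {x // p x} = Nat.card {x // p x ∧ q x} + Nat.card {x // p x ∧ ¬q x} := by
  classical
  rw [← Nat.card_sum]
  exact Nat.card_congr ((Equiv.sumCompl fun y : {x // p x} => q y).symm.trans
    (Equiv.sumCongr (Equiv.subtypeSubtypeEquivSubtypeInter p q)
      (Equiv.subtypeSubtypeEquivSubtypeInter p (¬q ·))))

section NoConsecutive

variable {α : Type*}

def NoConsecutive (a : α) {n : ℕ} (w : Fin n → α) : Prop :=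
  ∀ i : Fin n, ∀ h : i.val + 1 < n, ¬(w i = a ∧ w ⟨i.val + 1, h⟩ = a)

variable (a : α)

lemma noConsecutive_of_le_one {n : ℕ} (hn : n ≤ 1) (w : Fin n → α) : NoConsecutive a w :=
  fun _ h => by omega

lemma noConsecutive_iff_tail {n : ℕ} (w : Fin (n + 1) → α) :
    NoConsecutive a w ↔
      (∀ h : 0 < n, ¬(w 0 = a ∧ Fin.tail w ⟨0, h⟩ = a)) ∧ NoConsecutive a (Fin.tail w) := by
  refine ⟨fun hw => ⟨fun h => hw 0 (by simpa using h), fun i h => hw i.succ (by simpa using h)⟩,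
    fun ⟨hhead, htail⟩ i h => ?_⟩
  cases i using Fin.cases with
  | zero => exact hhead (by simpa using h)
  | succ i => exact htail i (by simpa using h)

lemma noConsecutive_and_head_ne_iff {n : ℕ} (w : Fin (n + 1) → α) :
    NoConsecutive a w ∧ w 0 ≠ a ↔ w 0 ≠ a ∧ NoConsecutive a (Fin.tail w) := by
  rw [noConsecutive_iff_tail]
  exact ⟨fun ⟨⟨_, ht⟩, h0⟩ => ⟨h0, ht⟩, fun ⟨h0, ht⟩ => ⟨⟨fun _ h => h0 h.1, ht⟩, h0⟩⟩

lemma noConsecutive_and_head_eq_iff {n : ℕ} (w : Fin (n + 2) → α) :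
    NoConsecutive a w ∧ w 0 = a ↔
      w 0 = a ∧ (NoConsecutive a (Fin.tail w) ∧ Fin.tail w 0 ≠ a) := by
  rw [noConsecutive_iff_tail]
  exact ⟨fun ⟨⟨hh, ht⟩, h0⟩ => ⟨h0, ht, fun h1 => hh n.succ_pos ⟨h0, h1⟩⟩,
    fun ⟨h0, ht, h1⟩ => ⟨⟨fun _ h => h1 h.2, ht⟩, h0⟩⟩

lemma Nat.card_subtype_head_and_tail {n : ℕ} (P : α → Prop) (Q : (Fin n → α) → Prop) :
    Nat.card {w : Fin (n + 1) → α // P (w 0) ∧ Q (Fin.tail w)} =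
      Nat.card {x // P x} * Nat.card {t // Q t} := by
  rw [← Nat.card_prod]
  exact Nat.card_congr (((Fin.consEquiv fun _ => α).symm.subtypeEquiv fun _ => Iff.rfl).trans
    Equiv.subtypeProdEquivProd)

lemma card_noConsecutive_and_head_eq (n : ℕ) :
    Nat.card {w : Fin (n + 2) → α // NoConsecutive a w ∧ w 0 = a} =
      Nat.card {w : Fin (n + 1) → α // NoConsecutive a w ∧ w 0 ≠ a} := by
  rw [Nat.card_congr (Equiv.subtypeEquivRight (noConsecutive_and_head_eq_iff a)),
    Nat.card_subtype_head_and_tail (· = a) fun t => NoConsecutive a t ∧ t 0 ≠ a, Nat.card_unique,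
    one_mul]

variable [Fintype α]

lemma card_noConsecutive_of_le_one {n : ℕ} (hn : n ≤ 1) :
    Nat.card {w : Fin n → α // NoConsecutive a w} = Fintype.card α ^ n := by
  rw [Nat.card_congr (Equiv.subtypeUnivEquiv (noConsecutive_of_le_one a hn)),
    Nat.card_eq_fintype_card, Fintype.card_fun, Fintype.card_fin]

variable [DecidableEq α] {q : ℕ}

lemma card_noConsecutive_and_head_ne (hq : Fintype.card α = q + 1) (n : ℕ) :
    Nat.card {w : Fin (n + 1) → α // NoConsecutive a w ∧ w 0 ≠ a} =
      q * Nat.card {w : Fin n → α // NoConsecutive a w} := by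
  have hne : Nat.card {x // x ≠ a} = q := by
    simp [Nat.card_eq_fintype_card, Fintype.card_subtype_compl, hq]
  rw [← hne, ← Nat.card_subtype_head_and_tail]
  exact Nat.card_congr (Equiv.subtypeEquivRight (noConsecutive_and_head_ne_iff a))

theorem card_noConsecutive (hq : Fintype.card α = q + 1) :
    ∀ n, Nat.card {w : Fin n → α // NoConsecutive a w} = choosePowSum q n
  | 0 => by rw [card_noConsecutive_of_le_one a zero_le_one, pow_zero, choosePowSum_zero]
  | 1 => by rw [card_noConsecutive_of_le_one a le_rfl, pow_one, hq, choosePowSum_one]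
  | n + 2 => by
    rw [Nat.card_subtype_eq_card_and_add_card_and_not _ (· 0 = a),
      card_noConsecutive_and_head_eq, card_noConsecutive_and_head_ne a hq,
      card_noConsecutive_and_head_ne a hq, choosePowSum_succ_succ,
      card_noConsecutive hq (n + 1), card_noConsecutive hq n, add_comm]

end NoConsecutive

theorem stmt12 (n k : ℕ) :
    Nat.card {f : Fin n → Fin (2 ^ k + 1) //
        ∀ i : Fin n, ∀ h : i.val + 1 < n, ¬(f i = 1 ∧ f ⟨i.val + 1, h⟩ = 1)} =
      ∑ j ∈ Finset.range ((n + 1) / 2 + 1),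
        (n + 1 - j).choose j * 2 ^ ((n - j) * k) := by
  refine (card_noConsecutive (1 : Fin (2 ^ k + 1)) (Fintype.card_fin _) n).trans ?_
  refine Finset.sum_congr rfl fun j _ => ?_
  rw [choosePowTerm, mul_comm (n - j) k, pow_mul]
end
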